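/- arXiv:2109.10520 — 9 statements merged into one kernel-verified Lean document; each statement's English description precedes it below -/
import Mathlib

section
/- Let G be a linear 3-graph containing an edge e = {x, y, z} with deg(x) ≥ 2, deg(y) ≥ 4, and deg(z) ≥ 6. Then G contains a crown: there exist edges e1, e2, e3 ∈ E(G), all distinct from e and pairwise disjoint, with x ∈ e1, y ∈ e2, z ∈ e3. -/
open Finset

/-- A linear 3-graph: all edges have 3 vertices and two distinct edges share at most one vertex. -/
def Linear3 {V : Type*} [DecidableEq V] (E : Finset (Finset V)) : Prop :=
  (∀ e ∈ E, e.card = 3) ∧ ∀ e ∈ E, ∀ f ∈ E, e ≠ f → (e ∩ f).card ≤ 1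

/-- Degree of a vertex: the number of edges containing it. -/
def deg {V : Type*} [DecidableEq V] (E : Finset (Finset V)) (v : V) : ℕ :=
  (E.filter fun e => v ∈ e).card

/-- A crown: four edges e = {x,y,z}, e1, e2, e3 with e1,e2,e3 pairwise disjoint and
    ei ∩ e = {x},{y},{z} respectively. -/
def HasCrown {V : Type*} [DecidableEq V] (E : Finset (Finset V)) : Prop :=
  ∃ x y z : V, ∃ e ∈ E, ∃ e1 ∈ E, ∃ e2 ∈ E, ∃ e3 ∈ E,
    x ≠ y ∧ x ≠ z ∧ y ≠ z ∧ e = {x, y, z} ∧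
    Disjoint e1 e2 ∧ Disjoint e1 e3 ∧ Disjoint e2 e3 ∧
    e1 ∩ e = {x} ∧ e2 ∩ e = {y} ∧ e3 ∩ e = {z}

/-- χ(v) = 1 if deg v ≤ 5, else 0. -/
def chi {V : Type*} [DecidableEq V] (E : Finset (Finset V)) (v : V) : ℚ :=
  if deg E v ≤ 5 then 1 else 0

/-- The set of vertices outside {x,y,z} lying on a common edge with p. -/
def nbhd {V : Type*} [DecidableEq V] (E : Finset (Finset V)) (x y z p : V) : Finset V :=
  ((E.filter fun f => p ∈ f).biUnion id) \ {x, y, z}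

/-- Two distinct edges of a linear 3-graph cannot share two distinct vertices. -/
lemma pair_not_shared {V : Type*} [DecidableEq V] {E : Finset (Finset V)} (hlin : Linear3 E)
    {g h : Finset V} (hg : g ∈ E) (hh : h ∈ E) (hne : g ≠ h) {p q : V} (hpq : p ≠ q)
    (hpg : p ∈ g) (hph : p ∈ h) (hqg : q ∈ g) (hqh : q ∈ h) : False := by
  have h1 := hlin.2 g hg h hh hne
  have hsub : ({p, q} : Finset V) ⊆ g ∩ h := by
    intro v hv
    simp only [mem_insert, mem_singleton] at hv
    rcases hv with rfl | rfl <;> simp [mem_inter, *]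
  have hc : ({p, q} : Finset V).card = 2 := by
    rw [card_insert_of_notMem (by simpa), card_singleton]
  have h2 : 2 ≤ (g ∩ h).card := hc ▸ card_le_card hsub
  omega

/-- At most `T.card` edges through `p` meet `T`, when `p ∉ T`. -/
lemma key_bound {V : Type*} [DecidableEq V] {E : Finset (Finset V)} (hlin : Linear3 E)
    (p : V) (T : Finset V) (hp : p ∉ T) :
    (E.filter fun g => p ∈ g ∧ ∃ v ∈ T, v ∈ g).card ≤ T.card := by
  by_contra h
  push_neg at h
  set f : Finset V → V := fun g => if hgT : (g ∩ T).Nonempty then hgT.choose else p with hf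
  have hmaps : ∀ g ∈ E.filter (fun g => p ∈ g ∧ ∃ v ∈ T, v ∈ g), f g ∈ T := by
    intro g hg
    simp only [mem_filter] at hg
    obtain ⟨_, _, v, hvT, hvg⟩ := hg
    have hne : (g ∩ T).Nonempty := ⟨v, mem_inter.2 ⟨hvg, hvT⟩⟩
    simp only [hf, dif_pos hne]
    exact (mem_inter.1 hne.choose_spec).2
  obtain ⟨g₁, hg₁, g₂, hg₂, hne, heq⟩ := exists_ne_map_eq_of_card_lt_of_maps_to h hmaps
  simp only [mem_filter] at hg₁ hg₂
  have hv₁ : f g₁ ∈ g₁ := by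
    have hne1 : (g₁ ∩ T).Nonempty := by
      obtain ⟨_, _, v, hvT, hvg⟩ := hg₁
      exact ⟨v, mem_inter.2 ⟨hvg, hvT⟩⟩
    simp only [hf, dif_pos hne1]
    exact (mem_inter.1 hne1.choose_spec).1
  have hv₂ : f g₂ ∈ g₂ := by
    have hne2 : (g₂ ∩ T).Nonempty := by
      obtain ⟨_, _, v, hvT, hvg⟩ := hg₂
      exact ⟨v, mem_inter.2 ⟨hvg, hvT⟩⟩
    simp only [hf, dif_pos hne2]
    exact (mem_inter.1 hne2.choose_spec).1
  have hvp : f g₁ ≠ p := fun hpe => hp (hpe ▸ hmaps g₁ (by simp [mem_filter, hg₁]))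
  exact pair_not_shared hlin hg₁.1 hg₂.1 hne hvp hv₁ (heq ▸ hv₂) hg₁.2.1 hg₂.2.1

theorem stmt_3 {V : Type*} [DecidableEq V] (E : Finset (Finset V)) (x y z : V)
    (hlin : Linear3 E) (he : ({x, y, z} : Finset V) ∈ E)
    (hxy : x ≠ y) (hxz : x ≠ z) (hyz : y ≠ z)
    (hx : 2 ≤ deg E x) (hy : 4 ≤ deg E y) (hz : 6 ≤ deg E z) :
    ∃ e1 ∈ E, ∃ e2 ∈ E, ∃ e3 ∈ E,
      e1 ≠ {x, y, z} ∧ e2 ≠ {x, y, z} ∧ e3 ≠ {x, y, z} ∧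
      Disjoint e1 e2 ∧ Disjoint e1 e3 ∧ Disjoint e2 e3 ∧
      x ∈ e1 ∧ y ∈ e2 ∧ z ∈ e3 := by
  classical
  set e0 : Finset V := {x, y, z} with he0
  have hxe0 : x ∈ e0 := by simp [he0]
  have hye0 : y ∈ e0 := by simp [he0]
  have hze0 : z ∈ e0 := by simp [he0]
  -- S p : edges through p other than e0
  have hScard : ∀ p, p ∈ e0 → ((E.filter fun g => p ∈ g).erase e0).card = deg E p - 1 := by
    intro p hp
    rw [card_erase_of_mem (mem_filter.2 ⟨he, hp⟩)]
    rfl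
  -- pick e1
  have h1 : 1 ≤ ((E.filter fun g => x ∈ g).erase e0).card := by
    rw [hScard x hxe0]; omega
  obtain ⟨e1, he1⟩ := card_pos.1 (by omega : 0 < ((E.filter fun g => x ∈ g).erase e0).card)
  have he1ne : e1 ≠ e0 := ne_of_mem_erase he1
  have he1E : e1 ∈ E := (mem_filter.1 (mem_of_mem_erase he1)).1
  have hxe1 : x ∈ e1 := (mem_filter.1 (mem_of_mem_erase he1)).2
  have hye1 : y ∉ e1 := fun hh =>
    pair_not_shared hlin he1E he he1ne hxy hxe1 hxe0 hh hye0
  have hze1 : z ∉ e1 := fun hh =>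
    pair_not_shared hlin he1E he he1ne hxz hxe1 hxe0 hh hze0
  -- pick e2: in S y, disjoint from e1
  have hT1 : (e1 \ {x}).card = 2 := by
    rw [card_sdiff_of_subset (by simpa using hxe1), hlin.1 e1 he1E, card_singleton]
  have hbad1 : (((E.filter fun g => y ∈ g).erase e0).filter fun g => ¬ Disjoint g e1).card ≤ 2 := by
    refine le_trans (card_le_card ?_) (hT1 ▸ key_bound hlin y (e1 \ {x})
      (fun hh => hye1 (mem_sdiff.1 hh).1))
    intro g hg
    simp only [mem_filter, mem_erase] at hg ⊢
    obtain ⟨⟨hgne, hgE, hyg⟩, hnd⟩ := hg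
    obtain ⟨v, hvg, hve1⟩ := not_disjoint_iff.1 hnd
    refine ⟨hgE, hyg, v, mem_sdiff.2 ⟨hve1, ?_⟩, hvg⟩
    simp only [mem_singleton]
    rintro rfl
    exact pair_not_shared hlin hgE he hgne hxy hvg hxe0 hyg hye0
  have hsplit1 := card_filter_add_card_filter_not
    (s := (E.filter fun g => y ∈ g).erase e0) (p := fun g => Disjoint g e1)
  have hy' : 3 ≤ ((E.filter fun g => y ∈ g).erase e0).card := by rw [hScard y hye0]; omega
  have hgood1 : 0 < (((E.filter fun g => y ∈ g).erase e0).filter fun g => Disjoint g e1).card := by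
    omega
  obtain ⟨e2, he2⟩ := card_pos.1 hgood1
  rw [mem_filter] at he2
  have he2ne : e2 ≠ e0 := ne_of_mem_erase he2.1
  have he2E : e2 ∈ E := (mem_filter.1 (mem_of_mem_erase he2.1)).1
  have hye2 : y ∈ e2 := (mem_filter.1 (mem_of_mem_erase he2.1)).2
  have hd21 : Disjoint e2 e1 := he2.2
  have hxe2 : x ∉ e2 := fun hh =>
    pair_not_shared hlin he2E he he2ne hxy hh hxe0 hye2 hye0
  have hze2 : z ∉ e2 := fun hh =>
    pair_not_shared hlin he2E he he2ne hyz hye2 hye0 hh hze0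
  -- pick e3: in S z, disjoint from e1 and e2
  set T2 : Finset V := (e1 \ {x}) ∪ (e2 \ {y}) with hT2def
  have hT2 : T2.card ≤ 4 := by
    refine le_trans (card_union_le _ _) ?_
    have h2' : (e2 \ {y}).card = 2 := by
      rw [card_sdiff_of_subset (by simpa using hye2), hlin.1 e2 he2E, card_singleton]
    omega
  have hzT2 : z ∉ T2 := by
    simp only [hT2def, mem_union, mem_sdiff]
    rintro (⟨hh, -⟩ | ⟨hh, -⟩)
    exacts [hze1 hh, hze2 hh]
  have hbad2 : (((E.filter fun g => z ∈ g).erase e0).filter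
      fun g => ¬ (Disjoint g e1 ∧ Disjoint g e2)).card ≤ 4 := by
    refine le_trans (card_le_card ?_) (le_trans (key_bound hlin z T2 hzT2) hT2)
    intro g hg
    simp only [mem_filter, mem_erase] at hg ⊢
    obtain ⟨⟨hgne, hgE, hzg⟩, hnd⟩ := hg
    refine ⟨hgE, hzg, ?_⟩
    have hxg : x ∉ g := fun hh =>
      pair_not_shared hlin hgE he hgne hxz hh hxe0 hzg hze0
    have hyg : y ∉ g := fun hh =>
      pair_not_shared hlin hgE he hgne hyz hh hye0 hzg hze0
    rw [not_and_or] at hnd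
    rcases hnd with hnd | hnd
    · obtain ⟨v, hvg, hve⟩ := not_disjoint_iff.1 hnd
      refine ⟨v, mem_union.2 (Or.inl (mem_sdiff.2 ⟨hve, ?_⟩)), hvg⟩
      simp only [mem_singleton]; rintro rfl; exact hxg hvg
    · obtain ⟨v, hvg, hve⟩ := not_disjoint_iff.1 hnd
      refine ⟨v, mem_union.2 (Or.inr (mem_sdiff.2 ⟨hve, ?_⟩)), hvg⟩
      simp only [mem_singleton]; rintro rfl; exact hyg hvg
  have hsplit2 := card_filter_add_card_filter_not
    (s := (E.filter fun g => z ∈ g).erase e0) (p := fun g => Disjoint g e1 ∧ Disjoint g e2)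
  have hz' : 5 ≤ ((E.filter fun g => z ∈ g).erase e0).card := by rw [hScard z hze0]; omega
  have hgood2 : 0 < (((E.filter fun g => z ∈ g).erase e0).filter
      fun g => Disjoint g e1 ∧ Disjoint g e2).card := by omega
  obtain ⟨e3, he3⟩ := card_pos.1 hgood2
  rw [mem_filter] at he3
  have he3ne : e3 ≠ e0 := ne_of_mem_erase he3.1
  have he3E : e3 ∈ E := (mem_filter.1 (mem_of_mem_erase he3.1)).1
  have hze3 : z ∈ e3 := (mem_filter.1 (mem_of_mem_erase he3.1)).2
  exact ⟨e1, he1E, e2, he2E, e3, he3E, he1ne, he2ne, he3ne,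
    hd21.symm, he3.2.1.symm, he3.2.2.symm, hxe1, hye2, hze3⟩
end

section
/- Let G be a crown-free linear 3-graph containing an edge e = {x, y, z} with deg(x) ≥ 4, deg(y) ≥ 5, deg(z) ≥ 5, and suppose every vertex of G incident to an edge meeting {x,y,z} has degree at most 5. Then the set G(y) of vertices outside {x,y,z} lying on a common edge with y equals the set G(z) of vertices outside {x,y,z} lying on a common edge with z. -/
open Finset

lemma pair_card_le {V : Type*} [DecidableEq V] (E : Finset (Finset V)) (hlin : Linear3 E)
    (p u : V) (hpu : p ≠ u) : (E.filter fun g => p ∈ g ∧ u ∈ g).card ≤ 1 := by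
  rw [Finset.card_le_one]
  intro g hg g' hg'
  simp only [mem_filter] at hg hg'
  by_contra hne
  have h := hlin.2 g hg.1 g' hg'.1 hne
  have hsub : ({p, u} : Finset V) ⊆ g ∩ g' := by
    intro a ha
    simp only [mem_insert, mem_singleton] at ha
    rcases ha with rfl | rfl <;>
      simp [mem_inter, hg.2.1, hg.2.2, hg'.2.1, hg'.2.2]
  have := card_le_card hsub
  rw [card_pair hpu] at this
  omega

lemma exists_avoid {V : Type*} [DecidableEq V] (S : Finset (Finset V)) (T : Finset V)
    (h1 : ∀ u ∈ T, (S.filter (fun g => u ∈ g)).card ≤ 1)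
    (h2 : T.card < S.card) : ∃ g ∈ S, ∀ u ∈ T, u ∉ g := by
  by_contra h
  push_neg at h
  have hsub : S ⊆ T.biUnion (fun u => S.filter (fun g => u ∈ g)) := by
    intro g hg
    obtain ⟨u, hu, hug⟩ := h g hg
    exact mem_biUnion.2 ⟨u, hu, mem_filter.2 ⟨hg, hug⟩⟩
  have h3 := card_le_card hsub
  have h4 := Finset.card_biUnion_le (s := T) (t := fun u => S.filter (fun g => u ∈ g))
  have h5 : (∑ u ∈ T, (S.filter (fun g => u ∈ g)).card) ≤ ∑ u ∈ T, 1 :=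
    Finset.sum_le_sum h1
  simp only [Finset.sum_const, smul_eq_mul, mul_one] at h5
  omega

lemma inter_eq_singleton {V : Type*} [DecidableEq V] (E : Finset (Finset V)) (hlin : Linear3 E)
    {e g : Finset V} {p : V} (he : e ∈ E) (hg : g ∈ E) (hne : g ≠ e)
    (hpg : p ∈ g) (hpe : p ∈ e) : g ∩ e = {p} := by
  have h1 := hlin.2 g hg e he hne
  have h2 : ({p} : Finset V) ⊆ g ∩ e := by
    intro a ha; simp only [mem_singleton] at ha; subst ha; exact mem_inter.2 ⟨hpg, hpe⟩
  exact (Finset.eq_of_subset_of_card_le h2 (by simpa using h1)).symm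

lemma key {V : Type*} [DecidableEq V] (E : Finset (Finset V)) (x y z : V)
    (hlin : Linear3 E) (hcf : ¬ HasCrown E) (he : ({x, y, z} : Finset V) ∈ E)
    (hxy : x ≠ y) (hxz : x ≠ z) (hyz : y ≠ z)
    (hx : 4 ≤ deg E x) (hz : 5 ≤ deg E z) :
    nbhd E x y z y ⊆ nbhd E x y z z := by
  set e : Finset V := {x, y, z} with hedef
  have hxe : x ∈ e := by simp [hedef]
  have hye : y ∈ e := by simp [hedef]
  have hze : z ∈ e := by simp [hedef]
  intro v hv
  rw [nbhd, mem_sdiff] at hv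
  obtain ⟨hv1, hv2⟩ := hv
  obtain ⟨f, hf, hvf⟩ := mem_biUnion.1 hv1
  rw [mem_filter] at hf
  obtain ⟨hfE, hyf⟩ := hf
  simp only [id] at hvf
  have hvne : v ∉ e := hv2
  by_contra hnz
  rw [nbhd, mem_sdiff] at hnz
  push_neg at hnz
  have hzv : ∀ g ∈ E, z ∈ g → v ∉ g := by
    intro g hg hzg hvg
    exact hvne (hnz (mem_biUnion.2 ⟨g, mem_filter.2 ⟨hg, hzg⟩, hvg⟩))
  -- f basics
  have hfne : f ≠ e := by rintro rfl; exact hvne hvf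
  have hfe : f ∩ e = {y} := inter_eq_singleton E hlin he hfE hfne hyf hye
  have hfcard : f.card = 3 := hlin.1 f hfE
  have hfse : (f \ e).card = 2 := by
    have := Finset.card_sdiff_add_card_inter f e
    rw [hfe] at this; simp at this; omega
  -- S_p and cardinalities
  have hSsub : ∀ p : V, p ∈ e → (E.filter fun g => p ∈ g) ⊆
      insert e (E.filter fun g => p ∈ g ∧ g ≠ e) := by
    intro p hp g hg
    rw [mem_filter] at hg
    by_cases hge : g = e
    · simp [hge]
    · exact mem_insert_of_mem (mem_filter.2 ⟨hg.1, hg.2, hge⟩)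
  have hScard : ∀ p : V, p ∈ e → deg E p ≤ (E.filter fun g => p ∈ g ∧ g ≠ e).card + 1 := by
    intro p hp
    have := card_le_card (hSsub p hp)
    have := card_insert_le e (E.filter fun g => p ∈ g ∧ g ≠ e)
    rw [deg]; omega
  have hSx : 3 ≤ (E.filter fun g => x ∈ g ∧ g ≠ e).card := by
    have := hScard x hxe; omega
  have hSz : 4 ≤ (E.filter fun g => z ∈ g ∧ g ≠ e).card := by
    have := hScard z hze; omega
  -- filter-card bound helper
  have hcnt : ∀ (p u : V), p ≠ u →
      (((E.filter fun g => p ∈ g ∧ g ≠ e)).filter (fun g => u ∈ g)).card ≤ 1 := by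
    intro p u hpu
    refine le_trans (card_le_card ?_) (pair_card_le E hlin p u hpu)
    intro g hg
    simp only [mem_filter] at hg ⊢
    exact ⟨hg.1.1, hg.1.2.1, hg.2⟩
  -- find e1 : x-edge disjoint from f
  obtain ⟨e1, he1, he1avoid⟩ := exists_avoid (E.filter fun g => x ∈ g ∧ g ≠ e) (f \ e)
    (fun u hu => hcnt x u (fun h => (mem_sdiff.1 hu).2 (h ▸ hxe))) (by omega)
  rw [mem_filter] at he1
  obtain ⟨he1E, hxe1, he1ne⟩ := he1
  have he1e : e1 ∩ e = {x} := inter_eq_singleton E hlin he he1E he1ne hxe1 hxe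
  have he1card : e1.card = 3 := hlin.1 e1 he1E
  have he1se : (e1 \ e).card = 2 := by
    have := Finset.card_sdiff_add_card_inter e1 e
    rw [he1e] at this; simp at this; omega
  have hd1f : Disjoint e1 f := by
    rw [Finset.disjoint_left]
    intro a ha1 haf
    by_cases hae : a ∈ e
    · have : a ∈ e1 ∩ e := mem_inter.2 ⟨ha1, hae⟩
      rw [he1e, mem_singleton] at this
      subst this
      have : a ∈ f ∩ e := mem_inter.2 ⟨haf, hae⟩
      rw [hfe, mem_singleton] at this
      exact hxy this
    · exact he1avoid a (mem_sdiff.2 ⟨haf, hae⟩) ha1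
  -- find e3 : z-edge disjoint from f and e1
  have hvfe : v ∈ f \ e := mem_sdiff.2 ⟨hvf, hvne⟩
  have hT2 : (((f \ e).erase v) ∪ (e1 \ e)).card ≤ 3 := by
    have h1 := card_union_le ((f \ e).erase v) (e1 \ e)
    have h2 := card_erase_of_mem hvfe
    omega
  obtain ⟨e3, he3, he3avoid⟩ := exists_avoid (E.filter fun g => z ∈ g ∧ g ≠ e)
    (((f \ e).erase v) ∪ (e1 \ e))
    (by
      intro u hu
      refine hcnt z u (fun h => ?_)
      subst h
      rcases mem_union.1 hu with h | h
      · exact (mem_sdiff.1 (mem_of_mem_erase h)).2 hze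
      · exact (mem_sdiff.1 h).2 hze)
    (by omega)
  rw [mem_filter] at he3
  obtain ⟨he3E, hze3, he3ne⟩ := he3
  have he3e : e3 ∩ e = {z} := inter_eq_singleton E hlin he he3E he3ne hze3 hze
  have hd3f : Disjoint f e3 := by
    rw [Finset.disjoint_left]
    intro a haf ha3
    by_cases hae : a ∈ e
    · have h1 : a ∈ f ∩ e := mem_inter.2 ⟨haf, hae⟩
      rw [hfe, mem_singleton] at h1
      have h2 : a ∈ e3 ∩ e := mem_inter.2 ⟨ha3, hae⟩
      rw [he3e, mem_singleton] at h2
      exact hyz (h1 ▸ h2 ▸ rfl)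
    · by_cases hav : a = v
      · subst hav; exact hzv e3 he3E hze3 ha3
      · exact he3avoid a (mem_union_left _ (mem_erase.2 ⟨hav, mem_sdiff.2 ⟨haf, hae⟩⟩)) ha3
  have hd13 : Disjoint e1 e3 := by
    rw [Finset.disjoint_left]
    intro a ha1 ha3
    by_cases hae : a ∈ e
    · have h1 : a ∈ e1 ∩ e := mem_inter.2 ⟨ha1, hae⟩
      rw [he1e, mem_singleton] at h1
      have h2 : a ∈ e3 ∩ e := mem_inter.2 ⟨ha3, hae⟩
      rw [he3e, mem_singleton] at h2
      exact hxz (h1 ▸ h2 ▸ rfl)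
    · exact he3avoid a (mem_union_right _ (mem_sdiff.2 ⟨ha1, hae⟩)) ha3
  exact hcf ⟨x, y, z, e, he, e1, he1E, f, hfE, e3, he3E, hxy, hxz, hyz, rfl,
    hd1f, hd13, hd3f, he1e, hfe, he3e⟩

theorem stmt_4 {V : Type*} [DecidableEq V] (E : Finset (Finset V)) (x y z : V)
    (hlin : Linear3 E) (hcf : ¬ HasCrown E) (he : ({x, y, z} : Finset V) ∈ E)
    (hxy : x ≠ y) (hxz : x ≠ z) (hyz : y ≠ z)
    (hx : 4 ≤ deg E x) (hy : 5 ≤ deg E y) (hz : 5 ≤ deg E z)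
    (hdeg : ∀ v : V, ∀ f ∈ E, v ∈ f → (f ∩ ({x, y, z} : Finset V)).Nonempty → deg E v ≤ 5) :
    nbhd E x y z y = nbhd E x y z z := by
  have hset : ({x, z, y} : Finset V) = {x, y, z} := by
    ext a; simp; tauto
  have hn : ∀ p : V, nbhd E x z y p = nbhd E x y z p := by
    intro p; rw [nbhd, nbhd, hset]
  refine Subset.antisymm (key E x y z hlin hcf he hxy hxz hyz hx hz) ?_
  have h2 := key E x z y hlin hcf (hset ▸ he) hxz hxy (Ne.symm hyz) hx hy
  rw [hn, hn] at h2
  exact h2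
end

section
/- Let G be a crown-free linear 3-graph containing an edge e = {x, y, z} such that deg(y) = deg(z) = 5, deg(x) ≥ 4, and G(y) = G(z), where G(p) is the set of vertices outside {x,y,z} sharing an edge with p. Then G(x) ⊆ G(y). -/
open Finset

theorem stmt_5 {V : Type*} [DecidableEq V] (E : Finset (Finset V)) (x y z : V)
    (hlin : Linear3 E) (hcf : ¬ HasCrown E) (he : ({x, y, z} : Finset V) ∈ E)
    (hxy : x ≠ y) (hxz : x ≠ z) (hyz : y ≠ z)
    (hx : 4 ≤ deg E x) (hy : deg E y = 5) (hz : deg E z = 5)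
    (hyz' : nbhd E x y z y = nbhd E x y z z) :
    nbhd E x y z x ⊆ nbhd E x y z y := by

  classical
  intro v hv
  by_contra hvy
  have hv' := hv
  simp only [nbhd, mem_sdiff, mem_biUnion, mem_filter, id] at hv'
  obtain ⟨⟨e1, ⟨he1E, hxe1⟩, hve1⟩, hvout⟩ := hv'
  set e₀ : Finset V := {x, y, z} with he₀
  have hxe₀ : x ∈ e₀ := by simp [he₀]
  have hye₀ : y ∈ e₀ := by simp [he₀]
  have hze₀ : z ∈ e₀ := by simp [he₀]
  have hvx : v ≠ x := fun h => hvout (by simp [he₀, h])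
  have hvY : ∀ f ∈ E, y ∈ f → v ∉ f := by
    intro f hf hyf hvf
    exact hvy (by
      simp only [nbhd, mem_sdiff, mem_biUnion, mem_filter, id]
      exact ⟨⟨f, ⟨hf, hyf⟩, hvf⟩, hvout⟩)
  have hvZ : ∀ f ∈ E, z ∈ f → v ∉ f := by
    intro f hf hzf hvf
    have hmem : v ∈ nbhd E x y z z := by
      simp only [nbhd, mem_sdiff, mem_biUnion, mem_filter, id]
      exact ⟨⟨f, ⟨hf, hzf⟩, hvf⟩, hvout⟩
    rw [← hyz'] at hmem
    exact hvy hmem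
  have hsing : ∀ f ∈ E, f ≠ e₀ → ∀ p, p ∈ f → p ∈ e₀ → f ∩ e₀ = {p} := by
    intro f hf hne p hpf hpe
    have h1 : (f ∩ e₀).card ≤ 1 := hlin.2 f hf e₀ he hne
    have h2 : p ∈ f ∩ e₀ := mem_inter.mpr ⟨hpf, hpe⟩
    exact Finset.eq_singleton_iff_unique_mem.mpr
      ⟨h2, fun q hq => Finset.card_le_one.mp h1 q hq p h2⟩
  have huniq : ∀ f1 ∈ E, ∀ f2 ∈ E, ∀ p q : V, p ≠ q → p ∈ f1 → q ∈ f1 → p ∈ f2 → q ∈ f2 →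
      f1 = f2 := by
    intro f1 h1 f2 h2 p q hpq hp1 hq1 hp2 hq2
    by_contra hne
    have hle := hlin.2 f1 h1 f2 h2 hne
    have hsub : ({p, q} : Finset V) ⊆ f1 ∩ f2 := by
      intro u hu
      rcases Finset.mem_insert.mp hu with rfl | hu
      · exact mem_inter.mpr ⟨hp1, hp2⟩
      · rw [Finset.mem_singleton.mp hu]; exact mem_inter.mpr ⟨hq1, hq2⟩
    have h2le : 2 ≤ (f1 ∩ f2).card := by
      calc 2 = ({p, q} : Finset V).card := (Finset.card_pair hpq).symm
        _ ≤ _ := Finset.card_le_card hsub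
    omega
  -- facts about e1
  have he1ne : e1 ≠ e₀ := fun h => hvout (h ▸ hve1)
  have he1int : e1 ∩ e₀ = {x} := hsing e1 he1E he1ne x hxe1 hxe₀
  have hye1 : y ∉ e1 := by
    intro h
    have : y ∈ e1 ∩ e₀ := mem_inter.mpr ⟨h, hye₀⟩
    rw [he1int] at this
    exact hxy (Finset.mem_singleton.mp this).symm
  have hze1 : z ∉ e1 := by
    intro h
    have : z ∈ e1 ∩ e₀ := mem_inter.mpr ⟨h, hze₀⟩
    rw [he1int] at this
    exact hxz (Finset.mem_singleton.mp this).symm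
  -- third vertex w of e1
  have hxvsub : ({x, v} : Finset V) ⊆ e1 := by
    intro u hu
    rcases Finset.mem_insert.mp hu with rfl | hu
    · exact hxe1
    · rw [Finset.mem_singleton.mp hu]; exact hve1
  have hwcard : (e1 \ {x, v}).card = 1 := by
    rw [card_sdiff_of_subset hxvsub, hlin.1 e1 he1E, Finset.card_pair (Ne.symm hvx)]
  obtain ⟨w, hw⟩ := Finset.card_eq_one.mp hwcard
  have hwmem : w ∈ e1 \ {x, v} := by rw [hw]; exact Finset.mem_singleton_self w
  have hwe1 : w ∈ e1 := (mem_sdiff.mp hwmem).1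
  have hwy : w ≠ y := fun h => hye1 (h ▸ hwe1)
  have hwz : w ≠ z := fun h => hze1 (h ▸ hwe1)
  have he1sub : ∀ u ∈ e1, u = x ∨ u = v ∨ u = w := by
    intro u hu
    by_cases hux : u = x
    · exact Or.inl hux
    by_cases huv : u = v
    · exact Or.inr (Or.inl huv)
    have : u ∈ e1 \ {x, v} := mem_sdiff.mpr ⟨hu, by simp [hux, huv]⟩
    rw [hw] at this
    exact Or.inr (Or.inr (Finset.mem_singleton.mp this))
  -- the edge sets at y and z
  set Fy : Finset (Finset V) := (E.filter fun f => y ∈ f).erase e₀ with hFy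
  set Gz : Finset (Finset V) := (E.filter fun f => z ∈ f).erase e₀ with hGz
  have hFycard : Fy.card = 4 := by
    rw [hFy, card_erase_of_mem (mem_filter.mpr ⟨he, hye₀⟩)]
    have : (E.filter fun f => y ∈ f).card = 5 := hy
    omega
  have hGzcard : Gz.card = 4 := by
    rw [hGz, card_erase_of_mem (mem_filter.mpr ⟨he, hze₀⟩)]
    have : (E.filter fun f => z ∈ f).card = 5 := hz
    omega
  have hFyfacts : ∀ f ∈ Fy, f ∈ E ∧ y ∈ f ∧ f ≠ e₀ ∧ x ∉ f ∧ z ∉ f := by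
    intro f hf
    rw [hFy, mem_erase, mem_filter] at hf
    obtain ⟨hfne, hfE, hyf⟩ := hf
    have hint := hsing f hfE hfne y hyf hye₀
    refine ⟨hfE, hyf, hfne, ?_, ?_⟩
    · intro h
      have : x ∈ f ∩ e₀ := mem_inter.mpr ⟨h, hxe₀⟩
      rw [hint] at this
      exact hxy (Finset.mem_singleton.mp this)
    · intro h
      have : z ∈ f ∩ e₀ := mem_inter.mpr ⟨h, hze₀⟩
      rw [hint] at this
      exact hyz (Finset.mem_singleton.mp this).symm
  have hGzfacts : ∀ g ∈ Gz, g ∈ E ∧ z ∈ g ∧ g ≠ e₀ ∧ x ∉ g ∧ y ∉ g := by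
    intro g hg
    rw [hGz, mem_erase, mem_filter] at hg
    obtain ⟨hgne, hgE, hzg⟩ := hg
    have hint := hsing g hgE hgne z hzg hze₀
    refine ⟨hgE, hzg, hgne, ?_, ?_⟩
    · intro h
      have : x ∈ g ∩ e₀ := mem_inter.mpr ⟨h, hxe₀⟩
      rw [hint] at this
      exact hxz (Finset.mem_singleton.mp this)
    · intro h
      have : y ∈ g ∩ e₀ := mem_inter.mpr ⟨h, hye₀⟩
      rw [hint] at this
      exact hyz (Finset.mem_singleton.mp this)
  -- Step A: there is g ∈ Gz disjoint from e1
  have hA : ∃ g ∈ Gz, Disjoint e1 g := by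
    by_contra h
    push_neg at h
    have hwall : ∀ g ∈ Gz, w ∈ g := by
      intro g hg
      obtain ⟨hgE, hzg, _, hxg, _⟩ := hGzfacts g hg
      obtain ⟨u, hue1, hug⟩ := Finset.not_disjoint_iff.mp (h g hg)
      rcases he1sub u hue1 with rfl | rfl | rfl
      · exact absurd hug hxg
      · exact absurd hug (hvZ g hgE hzg)
      · exact hug
    have hle : Gz.card ≤ 1 := Finset.card_le_one.mpr (fun g1 h1 g2 h2 =>
      huniq g1 (hGzfacts g1 h1).1 g2 (hGzfacts g2 h2).1 z w (Ne.symm hwz)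
        (hGzfacts g1 h1).2.1 (hwall g1 h1) (hGzfacts g2 h2).2.1 (hwall g2 h2))
    omega
  obtain ⟨g, hgGz, hge1disj⟩ := hA
  obtain ⟨hgE, hzg, hgne, hxg, hyg⟩ := hGzfacts g hgGz
  -- the two non-z vertices of g
  have hgcd : (g.erase z).card = 2 := by
    rw [card_erase_of_mem hzg, hlin.1 g hgE]
  obtain ⟨c, d, hcd, hcdset⟩ := Finset.card_eq_two.mp hgcd
  have hcg : c ∈ g := mem_of_mem_erase (by rw [hcdset]; simp)
  have hdg : d ∈ g := mem_of_mem_erase (by rw [hcdset]; simp)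
  have hcy : c ≠ y := fun h => hyg (h ▸ hcg)
  have hdy : d ≠ y := fun h => hyg (h ▸ hdg)
  have hgsub : ∀ u ∈ g, u ≠ z → u = c ∨ u = d := by
    intro u hu huz
    have : u ∈ g.erase z := mem_erase.mpr ⟨huz, hu⟩
    rw [hcdset] at this
    rcases Finset.mem_insert.mp this with h | h
    · exact Or.inl h
    · exact Or.inr (Finset.mem_singleton.mp h)
  -- Step B: there is f ∈ Fy disjoint from e1 and from g
  have hB : ∃ f ∈ Fy, Disjoint e1 f ∧ Disjoint f g := by
    by_contra h
    push_neg at h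
    have key : ∀ f ∈ Fy, w ∈ f ∨ c ∈ f ∨ d ∈ f := by
      intro f hf
      obtain ⟨hfE, hyf, _, hxf, hzf⟩ := hFyfacts f hf
      by_cases hd1 : Disjoint e1 f
      · obtain ⟨u, huf, hug⟩ := Finset.not_disjoint_iff.mp (h f hf hd1)
        have huz : u ≠ z := fun hh => hzf (hh ▸ huf)
        rcases hgsub u hug huz with rfl | rfl
        · exact Or.inr (Or.inl huf)
        · exact Or.inr (Or.inr huf)
      · obtain ⟨u, hue1, huf⟩ := Finset.not_disjoint_iff.mp hd1
        rcases he1sub u hue1 with rfl | rfl | rfl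
        · exact absurd huf hxf
        · exact absurd huf (hvY f hfE hyf)
        · exact Or.inl huf
    have hsubU : Fy ⊆ (Fy.filter fun f => w ∈ f) ∪ (Fy.filter fun f => c ∈ f) ∪
        (Fy.filter fun f => d ∈ f) := by
      intro f hf
      rcases key f hf with h1 | h1 | h1 <;> simp [mem_union, mem_filter, hf, h1]
    have hb1 : (Fy.filter fun f => w ∈ f).card ≤ 1 := Finset.card_le_one.mpr
      (fun a ha b hb =>
        huniq a (hFyfacts a (mem_of_mem_filter a ha)).1 b (hFyfacts b (mem_of_mem_filter b hb)).1
          y w (Ne.symm hwy) (hFyfacts a (mem_of_mem_filter a ha)).2.1 (mem_filter.mp ha).2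
          (hFyfacts b (mem_of_mem_filter b hb)).2.1 (mem_filter.mp hb).2)
    have hb2 : (Fy.filter fun f => c ∈ f).card ≤ 1 := Finset.card_le_one.mpr
      (fun a ha b hb =>
        huniq a (hFyfacts a (mem_of_mem_filter a ha)).1 b (hFyfacts b (mem_of_mem_filter b hb)).1
          y c (Ne.symm hcy) (hFyfacts a (mem_of_mem_filter a ha)).2.1 (mem_filter.mp ha).2
          (hFyfacts b (mem_of_mem_filter b hb)).2.1 (mem_filter.mp hb).2)
    have hb3 : (Fy.filter fun f => d ∈ f).card ≤ 1 := Finset.card_le_one.mpr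
      (fun a ha b hb =>
        huniq a (hFyfacts a (mem_of_mem_filter a ha)).1 b (hFyfacts b (mem_of_mem_filter b hb)).1
          y d (Ne.symm hdy) (hFyfacts a (mem_of_mem_filter a ha)).2.1 (mem_filter.mp ha).2
          (hFyfacts b (mem_of_mem_filter b hb)).2.1 (mem_filter.mp hb).2)
    have hc1 : Fy.card ≤ ((Fy.filter fun f => w ∈ f) ∪ (Fy.filter fun f => c ∈ f) ∪
        (Fy.filter fun f => d ∈ f)).card := Finset.card_le_card hsubU
    have hc2 := Finset.card_union_le ((Fy.filter fun f => w ∈ f) ∪ (Fy.filter fun f => c ∈ f))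
      (Fy.filter fun f => d ∈ f)
    have hc3 := Finset.card_union_le (Fy.filter fun f => w ∈ f) (Fy.filter fun f => c ∈ f)
    omega
  obtain ⟨f, hfFy, hfe1disj, hfgdisj⟩ := hB
  obtain ⟨hfE, hyf, hfne, _, _⟩ := hFyfacts f hfFy
  exact hcf ⟨x, y, z, e₀, he, e1, he1E, f, hfE, g, hgE, hxy, hxz, hyz, he₀,
    hfe1disj, hge1disj, hfgdisj, he1int, hsing f hfE hfne y hyf hye₀,
    hsing g hgE hgne z hzg hze₀⟩
end

section
/- Let G be a crown-free linear 3-graph on n vertices. Then |E(G)| ≤ 3(n - s)/2, where s is the number of vertices of G with degree at least 6. -/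
open Finset

namespace CrownFree

variable {V : Type*} [DecidableEq V] {E : Finset (Finset V)}

/-- Edges through a vertex. -/
def N (E : Finset (Finset V)) (v : V) : Finset (Finset V) := E.filter fun e => v ∈ e

lemma mem_N {v : V} {e : Finset V} : e ∈ N E v ↔ e ∈ E ∧ v ∈ e := by
  simp [N]

lemma card_N (v : V) : (N E v).card = deg E v := rfl

lemma edge_card (hlin : Linear3 E) {e : Finset V} (he : e ∈ E) : e.card = 3 := hlin.1 e he

lemma deg_pos (hlin : Linear3 E) {e : Finset V} {v : V} (he : e ∈ E) (hv : v ∈ e) :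
    1 ≤ deg E v := by
  rw [← card_N]
  exact Finset.card_pos.2 ⟨e, mem_N.2 ⟨he, hv⟩⟩

lemma inter_singleton (hlin : Linear3 E) {e f : Finset V} (he : e ∈ E) (hf : f ∈ E)
    (hef : e ≠ f) {v : V} (hve : v ∈ e) (hvf : v ∈ f) : e ∩ f = {v} := by
  have h1 := hlin.2 e he f hf hef
  have hv : v ∈ e ∩ f := Finset.mem_inter.2 ⟨hve, hvf⟩
  apply Finset.eq_singleton_iff_unique_mem.2
  exact ⟨hv, fun w hw => Finset.card_le_one.1 h1 w hw v hv⟩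

lemma pair_unique (hlin : Linear3 E) {e f : Finset V} (he : e ∈ E) (hf : f ∈ E)
    {v w : V} (hvw : v ≠ w) (hve : v ∈ e) (hwe : w ∈ e) (hvf : v ∈ f) (hwf : w ∈ f) :
    e = f := by
  by_contra hef
  have := inter_singleton hlin he hf hef hve hvf
  have hw : w ∈ e ∩ f := Finset.mem_inter.2 ⟨hwe, hwf⟩
  rw [this] at hw
  exact hvw (Finset.mem_singleton.1 hw).symm

lemma card_meets_le (𝒩 : Finset (Finset V)) (B : Finset V)
    (hcap : ∀ b ∈ B, (𝒩.filter fun f => b ∈ f).card ≤ 1) :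
    (𝒩.filter fun f => ¬ Disjoint f B).card ≤ B.card := by
  have hsub : (𝒩.filter fun f => ¬ Disjoint f B) ⊆ B.biUnion fun b => 𝒩.filter fun f => b ∈ f := by
    intro f hf
    rw [Finset.mem_filter] at hf
    obtain ⟨b, hbf, hbB⟩ := Finset.not_disjoint_iff.1 hf.2
    exact Finset.mem_biUnion.2 ⟨b, hbB, Finset.mem_filter.2 ⟨hf.1, hbf⟩⟩
  calc (𝒩.filter fun f => ¬ Disjoint f B).card
      ≤ (B.biUnion fun b => 𝒩.filter fun f => b ∈ f).card := Finset.card_le_card hsub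
    _ ≤ ∑ b ∈ B, (𝒩.filter fun f => b ∈ f).card := Finset.card_biUnion_le
    _ ≤ ∑ _b ∈ B, 1 := Finset.sum_le_sum hcap
    _ = B.card := by simp

lemma exists_avoid {𝒩 : Finset (Finset V)} {B : Finset V}
    (hcap : ∀ b ∈ B, (𝒩.filter fun f => b ∈ f).card ≤ 1)
    (hlt : B.card < 𝒩.card) : ∃ f ∈ 𝒩, Disjoint f B := by
  by_contra h
  push_neg at h
  have : 𝒩.filter (fun f => ¬ Disjoint f B) = 𝒩 := by
    apply Finset.filter_true_of_mem
    intro f hf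
    exact h f hf
  have h2 := card_meets_le 𝒩 B hcap
  rw [this] at h2
  omega

lemma cap_of_pair (hlin : Linear3 E) {𝒩 : Finset (Finset V)} {w : V}
    (h𝒩 : ∀ f ∈ 𝒩, f ∈ E ∧ w ∈ f) {b : V} (hb : b ≠ w) :
    (𝒩.filter fun f => b ∈ f).card ≤ 1 := by
  apply Finset.card_le_one.2
  intro f hf g hg
  rw [Finset.mem_filter] at hf hg
  exact pair_unique hlin (h𝒩 f hf.1).1 (h𝒩 g hg.1).1 hb hf.2 (h𝒩 f hf.1).2 hg.2 (h𝒩 g hg.1).2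

lemma eq_tripleton (hlin : Linear3 E) {e : Finset V} {x y z : V} (he : e ∈ E)
    (hx : x ∈ e) (hy : y ∈ e) (hz : z ∈ e) (hxy : x ≠ y) (hxz : x ≠ z) (hyz : y ≠ z) :
    e = {x, y, z} := by
  have hsub : ({x, y, z} : Finset V) ⊆ e := by
    intro a ha
    simp only [Finset.mem_insert, Finset.mem_singleton] at ha
    rcases ha with rfl | rfl | rfl <;> assumption
  have hcard : ({x, y, z} : Finset V).card = 3 := by
    rw [Finset.card_insert_of_notMem (by simp [hxy, hxz]),
      Finset.card_insert_of_notMem (by simp [hyz]), Finset.card_singleton]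
  exact (Finset.eq_of_subset_of_card_le hsub (by rw [hcard, edge_card hlin he])).symm

lemma mkCrown (hlin : Linear3 E) (hcf : ¬ HasCrown E) {e f g h : Finset V} {x y z : V}
    (he : e ∈ E) (hf : f ∈ E) (hg : g ∈ E) (hh : h ∈ E)
    (hx : x ∈ e) (hy : y ∈ e) (hz : z ∈ e) (hxy : x ≠ y) (hxz : x ≠ z) (hyz : y ≠ z)
    (hxf : x ∈ f) (hfe : f ≠ e) (hyg : y ∈ g) (hge : g ≠ e) (hzh : z ∈ h) (hhe : h ≠ e)
    (hfg : Disjoint f g) (hfh : Disjoint f h) (hgh : Disjoint g h) : False := by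
  apply hcf
  refine ⟨x, y, z, e, he, f, hf, g, hg, h, hh, hxy, hxz, hyz,
    eq_tripleton hlin he hx hy hz hxy hxz hyz, hfg, hfh, hgh, ?_, ?_, ?_⟩
  · exact inter_singleton hlin hf he (fun hh' => hfe hh') hxf hx
  · exact inter_singleton hlin hg he (fun hh' => hge hh') hyg hy
  · exact inter_singleton hlin hh he (fun hh' => hhe hh') hzh hz

end CrownFree

namespace CrownFree

variable {V : Type*} [DecidableEq V] {E : Finset (Finset V)}

/-- If v ∈ e∩g with g ≠ e, any other vertex of e is not in g. -/
lemma notMem_other (hlin : Linear3 E) {e g : Finset V} {v w : V} (he : e ∈ E) (hg : g ∈ E)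
    (hge : g ≠ e) (hv : v ∈ e) (hvg : v ∈ g) (hw : w ∈ e) (hwv : w ≠ v) : w ∉ g :=
  fun hwg => hge (pair_unique hlin hg he hwv.symm hvg hwg hv hw)

lemma disjoint_of_erase {f g : Finset V} {y : V} (hyg : y ∈ g) (hyf : y ∉ f)
    (hd : Disjoint f (g.erase y)) : Disjoint f g := by
  rw [← Finset.insert_erase hyg, Finset.disjoint_insert_right]
  exact ⟨hyf, hd⟩

lemma card_N_erase (hlin : Linear3 E) {e : Finset V} {v : V} (he : e ∈ E) (hv : v ∈ e) :
    ((N E v).erase e).card = deg E v - 1 := by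
  rw [Finset.card_erase_of_mem (mem_N.2 ⟨he, hv⟩), card_N]

lemma fact1 (hlin : Linear3 E) (hcf : ¬ HasCrown E) {e : Finset V} {x y z : V} (he : e ∈ E)
    (hx : x ∈ e) (hy : y ∈ e) (hz : z ∈ e) (hxy : x ≠ y) (hxz : x ≠ z) (hyz : y ≠ z)
    (hdx : 6 ≤ deg E x) (hdy : 4 ≤ deg E y) (hdz : 2 ≤ deg E z) : False := by
  -- pick h through z
  have hNz : ((N E z).erase e).card = deg E z - 1 := card_N_erase hlin he hz
  obtain ⟨h, hh'⟩ : ∃ h, h ∈ (N E z).erase e := by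
    apply Finset.card_pos.1
    omega
  obtain ⟨hhe, hhN⟩ := Finset.mem_erase.1 hh'
  obtain ⟨hhE, hzh⟩ := mem_N.1 hhN
  have hcardh : h.card = 3 := edge_card hlin hhE
  have hyh : y ∉ h := notMem_other hlin he hhE hhe hz hzh hy hyz
  have hxh : x ∉ h := notMem_other hlin he hhE hhe hz hzh hx hxz
  -- pick g through y disjoint from h
  obtain ⟨g, hg', hgdisj⟩ : ∃ g ∈ (N E y).erase e, Disjoint g (h.erase z) := by
    apply exists_avoid
    · intro b hb
      have hbz := Finset.mem_erase.1 hb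
      apply cap_of_pair hlin (w := y)
      · intro f hf
        have := Finset.mem_erase.1 hf
        exact ⟨(mem_N.1 this.2).1, (mem_N.1 this.2).2⟩
      · intro hby
        exact hyh (hby ▸ hbz.2)
    · have h1 : (h.erase z).card = 2 := by
        rw [Finset.card_erase_of_mem hzh, hcardh]
      have h2 : ((N E y).erase e).card = deg E y - 1 := card_N_erase hlin he hy
      omega
  obtain ⟨hge, hgN⟩ := Finset.mem_erase.1 hg'
  obtain ⟨hgE, hyg⟩ := mem_N.1 hgN
  have hcardg : g.card = 3 := edge_card hlin hgE
  have hzg : z ∉ g := notMem_other hlin he hgE hge hy hyg hz hyz.symm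
  have hxg : x ∉ g := notMem_other hlin he hgE hge hy hyg hx hxy
  have hgh : Disjoint g h := by
    rw [← Finset.insert_erase hzh, Finset.disjoint_insert_right]
    exact ⟨hzg, hgdisj⟩
  -- pick f through x disjoint from g and h
  obtain ⟨f, hf', hfdisj⟩ : ∃ f ∈ (N E x).erase e, Disjoint f ((g.erase y) ∪ (h.erase z)) := by
    apply exists_avoid
    · intro b hb
      rcases Finset.mem_union.1 hb with hb' | hb'
      · have hbg := Finset.mem_erase.1 hb'
        apply cap_of_pair hlin (w := x)
        · intro f' hf'
          have := Finset.mem_erase.1 hf'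
          exact ⟨(mem_N.1 this.2).1, (mem_N.1 this.2).2⟩
        · intro hbx
          exact hxg (hbx ▸ hbg.2)
      · have hbh := Finset.mem_erase.1 hb'
        apply cap_of_pair hlin (w := x)
        · intro f' hf'
          have := Finset.mem_erase.1 hf'
          exact ⟨(mem_N.1 this.2).1, (mem_N.1 this.2).2⟩
        · intro hbx
          exact hxh (hbx ▸ hbh.2)
    · have h1 : ((N E x).erase e).card = deg E x - 1 := card_N_erase hlin he hx
      have h2 : (g.erase y).card = 2 := by rw [Finset.card_erase_of_mem hyg, hcardg]
      have h3 : (h.erase z).card = 2 := by rw [Finset.card_erase_of_mem hzh, hcardh]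
      have h4 := Finset.card_union_le (g.erase y) (h.erase z)
      omega
  obtain ⟨hfe, hfN⟩ := Finset.mem_erase.1 hf'
  obtain ⟨hfE, hxf⟩ := mem_N.1 hfN
  have hyf : y ∉ f := notMem_other hlin he hfE hfe hx hxf hy hxy.symm
  have hzf : z ∉ f := notMem_other hlin he hfE hfe hx hxf hz hxz.symm
  rw [Finset.disjoint_union_right] at hfdisj
  have hfg : Disjoint f g := disjoint_of_erase hyg hyf hfdisj.1
  have hfh : Disjoint f h := disjoint_of_erase hzh hzf hfdisj.2
  exact mkCrown hlin hcf he hfE hgE hhE hx hy hz hxy hxz hyz hxf hfe hyg hge hzh hhe hfg hfh hgh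

end CrownFree
namespace CrownFree

variable {V : Type*} [DecidableEq V] {E : Finset (Finset V)}

/-- The "type" of an edge g w.r.t. center edge f through hub x : the set of other
edges through x that g meets. -/
def Ty (E : Finset (Finset V)) (x : V) (f g : Finset V) : Finset (Finset V) :=
  ((N E x).erase f).filter fun f' => ¬ Disjoint g f'

lemma mem_Ty {x : V} {f g f' : Finset V} :
    f' ∈ Ty E x f g ↔ (f' ≠ f ∧ f' ∈ N E x) ∧ ¬ Disjoint g f' := by
  simp [Ty, Finset.mem_filter, Finset.mem_erase]

lemma Ty_subset {x : V} {f g : Finset V} : Ty E x f g ⊆ (N E x).erase f :=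
  Finset.filter_subset _ _

/-- Every edge at u (other than f={x,u,w}) has a disjoint partner at w. -/
lemma partner (hlin : Linear3 E) {f : Finset V} {u w : V} (hfE : f ∈ E)
    (huf : u ∈ f) (hwf : w ∈ f) (huw : u ≠ w) (hdw : 4 ≤ deg E w)
    {g : Finset V} (hg : g ∈ (N E u).erase f) :
    ∃ h ∈ (N E w).erase f, Disjoint g h := by
  obtain ⟨hge, hgN⟩ := Finset.mem_erase.1 hg
  obtain ⟨hgE, hug⟩ := mem_N.1 hgN
  have hwg : w ∉ g := notMem_other hlin hfE hgE hge huf hug hwf huw.symm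
  obtain ⟨h, hh, hdisj⟩ : ∃ h ∈ (N E w).erase f, Disjoint h (g.erase u) := by
    apply exists_avoid
    · intro b hb
      have hbb := Finset.mem_erase.1 hb
      apply cap_of_pair hlin (w := w)
      · intro f' hf'
        have := Finset.mem_erase.1 hf'
        exact ⟨(mem_N.1 this.2).1, (mem_N.1 this.2).2⟩
      · intro hbw; exact hwg (hbw ▸ hbb.2)
    · have h1 : (g.erase u).card = 2 := by
        rw [Finset.card_erase_of_mem hug, edge_card hlin hgE]
      have h2 : ((N E w).erase f).card = deg E w - 1 := card_N_erase hlin hfE hwf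
      omega
  refine ⟨h, hh, ?_⟩
  obtain ⟨hhe, hhN⟩ := Finset.mem_erase.1 hh
  obtain ⟨hhE, hwh⟩ := mem_N.1 hhN
  have huh : u ∉ h := notMem_other hlin hfE hhE hhe hwf hwh huf huw
  rw [← Finset.insert_erase hug, Finset.disjoint_insert_left]
  exact ⟨huh, hdisj.symm⟩

lemma Ty_card_le (hlin : Linear3 E) {x : V} {f g : Finset V} {u : V} (hfE : f ∈ E)
    (hxf : x ∈ f) (huf : u ∈ f) (hux : u ≠ x) (hg : g ∈ (N E u).erase f) :
    (Ty E x f g).card ≤ 2 := by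
  obtain ⟨hge, hgN⟩ := Finset.mem_erase.1 hg
  obtain ⟨hgE, hug⟩ := mem_N.1 hgN
  have hxg : x ∉ g := notMem_other hlin hfE hgE hge huf hug hxf hux.symm
  have hsub : Ty E x f g ⊆ (g.erase u).biUnion
      (fun v => ((N E x).erase f).filter fun f' => v ∈ f') := by
    intro f' hf'
    obtain ⟨⟨hne, hNx⟩, hnd⟩ := mem_Ty.1 hf'
    obtain ⟨v, hvg, hvf'⟩ := Finset.not_disjoint_iff.1 hnd
    have hvu : v ≠ u := by
      intro hvu'
      subst hvu'
      obtain ⟨hf'E, hxf'⟩ := mem_N.1 hNx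
      have hmem : v ∈ f' ∩ f := Finset.mem_inter.2 ⟨hvf', huf⟩
      rw [inter_singleton hlin hf'E hfE hne hxf' hxf] at hmem
      exact hux (Finset.mem_singleton.1 hmem)
    refine Finset.mem_biUnion.2 ⟨v, Finset.mem_erase.2 ⟨hvu, hvg⟩,
      Finset.mem_filter.2 ⟨Finset.mem_erase.2 ⟨hne, hNx⟩, hvf'⟩⟩
  calc (Ty E x f g).card ≤ _ := Finset.card_le_card hsub
    _ ≤ ∑ v ∈ g.erase u, (((N E x).erase f).filter fun f' => v ∈ f').card :=
        Finset.card_biUnion_le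
    _ ≤ ∑ _v ∈ g.erase u, 1 := by
        apply Finset.sum_le_sum
        intro v hv
        apply cap_of_pair hlin (w := x)
        · intro f' hf'
          have := Finset.mem_erase.1 hf'
          exact ⟨(mem_N.1 this.2).1, (mem_N.1 this.2).2⟩
        · intro hvx
          exact hxg (hvx ▸ (Finset.mem_erase.1 hv).2)
    _ = (g.erase u).card := by simp
    _ = 2 := by rw [Finset.card_erase_of_mem hug, edge_card hlin hgE]

/-- Facts about a disjoint pair (g at u, h at w) around center f = {x,u,w}, deg x = 5. -/
lemma pairFacts (hlin : Linear3 E) (hcf : ¬ HasCrown E) {x u w : V} {f : Finset V}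
    (hdx : deg E x = 5) (hfE : f ∈ E) (hxf : x ∈ f) (huf : u ∈ f) (hwf : w ∈ f)
    (hux : u ≠ x) (hwx : w ≠ x) (huw : u ≠ w)
    {g h : Finset V} (hg : g ∈ (N E u).erase f) (hh : h ∈ (N E w).erase f)
    (hgh : Disjoint g h) :
    (Ty E x f g).card = 2 ∧ (Ty E x f h).card = 2 ∧
      Ty E x f h = ((N E x).erase f) \ Ty E x f g := by
  obtain ⟨hge, hgN⟩ := Finset.mem_erase.1 hg
  obtain ⟨hgE, hug⟩ := mem_N.1 hgN
  obtain ⟨hhe, hhN⟩ := Finset.mem_erase.1 hh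
  obtain ⟨hhE, hwh⟩ := mem_N.1 hhN
  have hunion : Ty E x f g ∪ Ty E x f h = (N E x).erase f := by
    apply Finset.Subset.antisymm
    · exact Finset.union_subset Ty_subset Ty_subset
    · intro f' hf'
      obtain ⟨hne, hNx⟩ := Finset.mem_erase.1 hf'
      obtain ⟨hf'E, hxf'⟩ := mem_N.1 hNx
      by_contra hnot
      rw [Finset.mem_union] at hnot
      push_neg at hnot
      have d1 : Disjoint g f' := by
        by_contra hd
        exact hnot.1 (mem_Ty.2 ⟨⟨hne, hNx⟩, hd⟩)
      have d2 : Disjoint h f' := by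
        by_contra hd
        exact hnot.2 (mem_Ty.2 ⟨⟨hne, hNx⟩, hd⟩)
      exact mkCrown hlin hcf hfE hf'E hgE hhE hxf huf hwf hux.symm hwx.symm huw
        hxf' hne hug hge hwh hhe d1.symm d2.symm hgh
  have hc1 : (Ty E x f g).card ≤ 2 := Ty_card_le hlin hfE hxf huf hux hg
  have hc2 : (Ty E x f h).card ≤ 2 := Ty_card_le hlin hfE hxf hwf hwx hh
  have hU : ((N E x).erase f).card = 4 := by
    rw [card_N_erase hlin hfE hxf, hdx]
  have hle := Finset.card_union_le (Ty E x f g) (Ty E x f h)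
  rw [hunion, hU] at hle
  have hcc := Finset.card_union_add_card_inter (Ty E x f g) (Ty E x f h)
  rw [hunion, hU] at hcc
  have hi0 : (Ty E x f g ∩ Ty E x f h).card = 0 := by omega
  have hdisj : Disjoint (Ty E x f g) (Ty E x f h) := by
    rw [Finset.disjoint_iff_inter_eq_empty]
    exact Finset.card_eq_zero.1 hi0
  refine ⟨by omega, by omega, ?_⟩
  apply Finset.Subset.antisymm
  · intro a ha
    rw [Finset.mem_sdiff]
    exact ⟨Ty_subset ha, fun hag => (Finset.disjoint_left.1 hdisj hag) ha⟩
  · intro a ha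
    rw [Finset.mem_sdiff] at ha
    have : a ∈ Ty E x f g ∪ Ty E x f h := hunion ▸ ha.1
    rcases Finset.mem_union.1 this with h' | h'
    · exact absurd h' ha.2
    · exact h'

end CrownFree
namespace CrownFree

variable {V : Type*} [DecidableEq V] {E : Finset (Finset V)}

lemma rigidity (hlin : Linear3 E) (hcf : ¬ HasCrown E) {x u w : V} {f : Finset V}
    (hdx : deg E x = 5) (hfE : f ∈ E) (hxf : x ∈ f) (huf : u ∈ f) (hwf : w ∈ f)
    (hux : u ≠ x) (hwx : w ≠ x) (huw : u ≠ w) (hdw : 4 ≤ deg E w)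
    {g g' : Finset V} (hg : g ∈ (N E u).erase f) (hg' : g' ∈ (N E u).erase f) :
    Ty E x f g = Ty E x f g' ∨ Ty E x f g = ((N E x).erase f) \ Ty E x f g' := by
  by_contra hcon
  push_neg at hcon
  obtain ⟨hne1, hne2⟩ := hcon
  obtain ⟨hge, hgN⟩ := Finset.mem_erase.1 hg
  obtain ⟨hgE, hug⟩ := mem_N.1 hgN
  obtain ⟨hg'e, hg'N⟩ := Finset.mem_erase.1 hg'
  obtain ⟨hg'E, hug'⟩ := mem_N.1 hg'N
  have hgg' : g ≠ g' := by rintro rfl; exact hne1 rfl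
  have hUcard : ((N E x).erase f).card = 4 := by
    rw [card_N_erase hlin hfE hxf, hdx]
  -- cards of the two types
  obtain ⟨h₀, hh₀, hd₀⟩ := partner hlin hfE huf hwf huw hdw hg
  have hcg : (Ty E x f g).card = 2 :=
    (pairFacts hlin hcf hdx hfE hxf huf hwf hux hwx huw hg hh₀ hd₀).1
  obtain ⟨h₁, hh₁, hd₁⟩ := partner hlin hfE huf hwf huw hdw hg'
  have hcg' : (Ty E x f g').card = 2 :=
    (pairFacts hlin hcf hdx hfE hxf huf hwf hux hwx huw hg' hh₁ hd₁).1
  have hsU : Ty E x f g ⊆ (N E x).erase f := Ty_subset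
  have htU : Ty E x f g' ⊆ (N E x).erase f := Ty_subset
  -- the two types overlap
  have hst : ¬ Disjoint (Ty E x f g) (Ty E x f g') := by
    intro hd
    apply hne2
    have hsub : Ty E x f g ⊆ ((N E x).erase f) \ Ty E x f g' :=
      Finset.subset_sdiff.2 ⟨hsU, hd⟩
    have hcsd : (((N E x).erase f) \ Ty E x f g').card = 2 := by
      rw [Finset.card_sdiff_of_subset htU]; omega
    exact Finset.eq_of_subset_of_card_le hsub (by omega)
  obtain ⟨fq, hfqs, hfqt⟩ := Finset.not_disjoint_iff.1 hst
  -- name the other members fp (of Ty g) and fr (of Ty g')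
  have hcse : ((Ty E x f g).erase fq).card = 1 := by
    rw [Finset.card_erase_of_mem hfqs, hcg]
  obtain ⟨fp, hfp⟩ := Finset.card_eq_one.1 hcse
  have hfp_mem : fp ∈ (Ty E x f g).erase fq := by rw [hfp]; exact Finset.mem_singleton_self fp
  have hfps : fp ∈ Ty E x f g := Finset.mem_of_mem_erase hfp_mem
  have hfpq : fp ≠ fq := (Finset.mem_erase.1 hfp_mem).1
  have hs_eq : Ty E x f g = {fq, fp} := by
    rw [← Finset.insert_erase hfqs, hfp]
  have hcte : ((Ty E x f g').erase fq).card = 1 := by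
    rw [Finset.card_erase_of_mem hfqt, hcg']
  obtain ⟨fr, hfr⟩ := Finset.card_eq_one.1 hcte
  have hfr_mem : fr ∈ (Ty E x f g').erase fq := by rw [hfr]; exact Finset.mem_singleton_self fr
  have hfrt : fr ∈ Ty E x f g' := Finset.mem_of_mem_erase hfr_mem
  have hfrq : fr ≠ fq := (Finset.mem_erase.1 hfr_mem).1
  have ht_eq : Ty E x f g' = {fq, fr} := by
    rw [← Finset.insert_erase hfqt, hfr]
  have hpr : fp ≠ fr := by
    intro h
    exact hne1 (by simp [hs_eq, ht_eq, h])
  -- memberships in U and basic facts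
  have hfpU : fp ∈ (N E x).erase f := hsU hfps
  have hfqU : fq ∈ (N E x).erase f := hsU hfqs
  have hfrU : fr ∈ (N E x).erase f := htU hfrt
  obtain ⟨hfpf, hfpN⟩ := Finset.mem_erase.1 hfpU
  obtain ⟨hfpE, hxfp⟩ := mem_N.1 hfpN
  obtain ⟨hfqf, hfqN⟩ := Finset.mem_erase.1 hfqU
  obtain ⟨hfqE, hxfq⟩ := mem_N.1 hfqN
  obtain ⟨hfrf, hfrN⟩ := Finset.mem_erase.1 hfrU
  obtain ⟨hfrE, hxfr⟩ := mem_N.1 hfrN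
  -- vertices of f other than x are not in members of U
  have hnotin : ∀ f', f' ∈ (N E x).erase f → ∀ p, p ∈ f → p ≠ x → p ∉ f' := by
    intro f' hf'U p hpf hpx hpf'
    obtain ⟨hf'f, hf'N⟩ := Finset.mem_erase.1 hf'U
    obtain ⟨hf'E, hxf'⟩ := mem_N.1 hf'N
    have hmem : p ∈ f' ∩ f := Finset.mem_inter.2 ⟨hpf', hpf⟩
    rw [inter_singleton hlin hf'E hfE hf'f hxf' hxf] at hmem
    exact hpx (Finset.mem_singleton.1 hmem)
  have hcommonx : ∀ f1 f2, f1 ∈ (N E x).erase f → f2 ∈ (N E x).erase f → f1 ≠ f2 →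
      ∀ a, a ∈ f1 → a ∈ f2 → a = x := by
    intro f1 f2 h1 h2 h12 a ha1 ha2
    obtain ⟨_, h1N⟩ := Finset.mem_erase.1 h1
    obtain ⟨h1E, hx1⟩ := mem_N.1 h1N
    obtain ⟨_, h2N⟩ := Finset.mem_erase.1 h2
    obtain ⟨h2E, hx2⟩ := mem_N.1 h2N
    have hmem : a ∈ f1 ∩ f2 := Finset.mem_inter.2 ⟨ha1, ha2⟩
    rw [inter_singleton hlin h1E h2E h12 hx1 hx2] at hmem
    exact Finset.mem_singleton.1 hmem
  -- tokens
  obtain ⟨cp, hcpg, hcpfp⟩ := Finset.not_disjoint_iff.1 (mem_Ty.1 hfps).2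
  obtain ⟨cq, hcqg, hcqfq⟩ := Finset.not_disjoint_iff.1 (mem_Ty.1 hfqs).2
  obtain ⟨cq', hcq'g', hcq'fq⟩ := Finset.not_disjoint_iff.1 (mem_Ty.1 hfqt).2
  obtain ⟨cr', hcr'g', hcr'fr⟩ := Finset.not_disjoint_iff.1 (mem_Ty.1 hfrt).2
  have hxg : x ∉ g := notMem_other hlin hfE hgE hge huf hug hxf hux.symm
  have hxg' : x ∉ g' := notMem_other hlin hfE hg'E hg'e huf hug' hxf hux.symm
  have hggu : ∀ v, v ∈ g → v ∈ g' → v = u := by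
    intro v hv hv'
    have hmem : v ∈ g ∩ g' := Finset.mem_inter.2 ⟨hv, hv'⟩
    rw [inter_singleton hlin hgE hg'E hgg' hug hug'] at hmem
    exact Finset.mem_singleton.1 hmem
  -- distinctness of tokens
  have hcpx : cp ≠ x := fun h => hxg (h ▸ hcpg)
  have hcqx : cq ≠ x := fun h => hxg (h ▸ hcqg)
  have hcq'x : cq' ≠ x := fun h => hxg' (h ▸ hcq'g')
  have hcr'x : cr' ≠ x := fun h => hxg' (h ▸ hcr'g')
  have hcpu : cp ≠ u := fun h => (hnotin fp hfpU u huf hux) (h ▸ hcpfp)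
  have hcqu : cq ≠ u := fun h => (hnotin fq hfqU u huf hux) (h ▸ hcqfq)
  have hcq'u : cq' ≠ u := fun h => (hnotin fq hfqU u huf hux) (h ▸ hcq'fq)
  have hcr'u : cr' ≠ u := fun h => (hnotin fr hfrU u huf hux) (h ▸ hcr'fr)
  have hcpw : cp ≠ w := fun h => (hnotin fp hfpU w hwf hwx) (h ▸ hcpfp)
  have hcqw : cq ≠ w := fun h => (hnotin fq hfqU w hwf hwx) (h ▸ hcqfq)
  have hcq'w : cq' ≠ w := fun h => (hnotin fq hfqU w hwf hwx) (h ▸ hcq'fq)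
  have hcr'w : cr' ≠ w := fun h => (hnotin fr hfrU w hwf hwx) (h ▸ hcr'fr)
  have hcpcq : cp ≠ cq := fun h => hcpx (hcommonx fp fq hfpU hfqU hfpq cp hcpfp (h ▸ hcqfq))
  have hcq'cr' : cq' ≠ cr' := fun h =>
    hcq'x (hcommonx fq fr hfqU hfrU hfrq.symm cq' hcq'fq (h ▸ hcr'fr))
  have hcqcq' : cq ≠ cq' := by
    intro h
    have heq : cq = u := hggu cq hcqg (h ▸ hcq'g')
    exact (hnotin fq hfqU u huf hux) (heq ▸ hcqfq)
  -- decompositions of g and g'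
  have hgdec : ∀ v, v ∈ g → v ≠ u → (v = cp ∨ v = cq) := by
    have h3 : g = {u, cp, cq} :=
      eq_tripleton hlin hgE hug hcpg hcqg hcpu.symm hcqu.symm hcpcq
    intro v hv hvu
    rw [h3] at hv
    simp only [Finset.mem_insert, Finset.mem_singleton] at hv
    tauto
  have hg'dec : ∀ v, v ∈ g' → v ≠ u → (v = cq' ∨ v = cr') := by
    have h3 : g' = {u, cq', cr'} :=
      eq_tripleton hlin hg'E hug' hcq'g' hcr'g' hcq'u.symm hcr'u.symm hcq'cr'
    intro v hv hvu
    rw [h3] at hv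
    simp only [Finset.mem_insert, Finset.mem_singleton] at hv
    tauto
  -- classification of edges at w
  have classify : ∀ b ∈ (N E w).erase f,
      (cr' ∈ b ∧ Disjoint g b) ∨ (cp ∈ b ∧ Disjoint g' b) ∨
      ((cp ∈ b ∨ cq ∈ b) ∧ (cq' ∈ b ∨ cr' ∈ b)) := by
    intro b hb
    obtain ⟨hbe, hbN⟩ := Finset.mem_erase.1 hb
    obtain ⟨hbE, hwb⟩ := mem_N.1 hbN
    have hub : u ∉ b := notMem_other hlin hfE hbE hbe hwf hwb huf huw
    by_cases h1 : Disjoint g b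
    · by_cases h2 : Disjoint g' b
      · exfalso
        have e1 := (pairFacts hlin hcf hdx hfE hxf huf hwf hux hwx huw hg hb h1).2.2
        have e2 := (pairFacts hlin hcf hdx hfE hxf huf hwf hux hwx huw hg' hb h2).2.2
        apply hne1
        rw [← Finset.sdiff_sdiff_eq_self hsU, ← e1, e2, Finset.sdiff_sdiff_eq_self htU]
      · left
        obtain ⟨v, hvg', hvb⟩ := Finset.not_disjoint_iff.1 h2
        have hvu : v ≠ u := fun h => hub (h ▸ hvb)
        rcases hg'dec v hvg' hvu with rfl | rfl
        · exfalso
          have e1 := (pairFacts hlin hcf hdx hfE hxf huf hwf hux hwx huw hg hb h1).2.2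
          have hfqTyb : fq ∈ Ty E x f b :=
            mem_Ty.2 ⟨⟨hfqf, hfqN⟩, Finset.not_disjoint_iff.2 ⟨v, hvb, hcq'fq⟩⟩
          rw [e1] at hfqTyb
          exact (Finset.mem_sdiff.1 hfqTyb).2 hfqs
        · exact ⟨hvb, h1⟩
    · by_cases h2 : Disjoint g' b
      · right; left
        obtain ⟨v, hvg, hvb⟩ := Finset.not_disjoint_iff.1 h1
        have hvu : v ≠ u := fun h => hub (h ▸ hvb)
        rcases hgdec v hvg hvu with rfl | rfl
        · exact ⟨hvb, h2⟩
        · exfalso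
          have e2 := (pairFacts hlin hcf hdx hfE hxf huf hwf hux hwx huw hg' hb h2).2.2
          have hfqTyb : fq ∈ Ty E x f b :=
            mem_Ty.2 ⟨⟨hfqf, hfqN⟩, Finset.not_disjoint_iff.2 ⟨v, hvb, hcqfq⟩⟩
          rw [e2] at hfqTyb
          exact (Finset.mem_sdiff.1 hfqTyb).2 hfqt
      · right; right
        obtain ⟨v, hvg, hvb⟩ := Finset.not_disjoint_iff.1 h1
        obtain ⟨v', hv'g', hv'b⟩ := Finset.not_disjoint_iff.1 h2
        constructor
        · rcases hgdec v hvg (fun h => hub (h ▸ hvb)) with rfl | rfl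
          · exact Or.inl hvb
          · exact Or.inr hvb
        · rcases hg'dec v' hv'g' (fun h => hub (h ▸ hv'b)) with rfl | rfl
          · exact Or.inl hv'b
          · exact Or.inr hv'b
  -- a token can be in at most one edge at w
  have huniq : ∀ τ : V, τ ≠ w → ∀ b b', b ∈ (N E w).erase f → b' ∈ (N E w).erase f →
      b ≠ b' → τ ∈ b → τ ∈ b' → False := by
    intro τ hτw b b' hb hb' hbb' hτb hτb'
    obtain ⟨_, hbN⟩ := Finset.mem_erase.1 hb
    obtain ⟨hbE, hwb⟩ := mem_N.1 hbN
    obtain ⟨_, hb'N⟩ := Finset.mem_erase.1 hb'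
    obtain ⟨hb'E, hwb'⟩ := mem_N.1 hb'N
    have hmem : τ ∈ b ∩ b' := Finset.mem_inter.2 ⟨hτb, hτb'⟩
    rw [inter_singleton hlin hbE hb'E hbb' hwb hwb'] at hmem
    exact hτw (Finset.mem_singleton.1 hmem)
  -- cq and cq' cannot both be in an edge at w
  have hcapq : ∀ b, b ∈ (N E w).erase f → cq ∈ b → cq' ∈ b → False := by
    intro b hb h1 h2
    obtain ⟨hbe, hbN⟩ := Finset.mem_erase.1 hb
    obtain ⟨hbE, hwb⟩ := mem_N.1 hbN
    have hbfq : b ≠ fq := by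
      intro h
      exact (hnotin fq hfqU w hwf hwx) (h ▸ hwb)
    have hcard := hlin.2 b hbE fq hfqE hbfq
    have hsub : ({cq, cq'} : Finset V) ⊆ b ∩ fq := by
      intro a ha
      simp only [Finset.mem_insert, Finset.mem_singleton] at ha
      rcases ha with rfl | rfl
      · exact Finset.mem_inter.2 ⟨h1, hcqfq⟩
      · exact Finset.mem_inter.2 ⟨h2, hcq'fq⟩
    have hc2 : ({cq, cq'} : Finset V).card = 2 := by
      rw [Finset.card_insert_of_notMem (by simp [hcqcq']), Finset.card_singleton]
    have := Finset.card_le_card hsub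
    omega
  -- pick three distinct edges at w
  have hWcard : 3 ≤ ((N E w).erase f).card := by
    rw [card_N_erase hlin hfE hwf]; omega
  obtain ⟨W3, hW3sub, hW3card⟩ := Finset.exists_subset_card_eq hWcard
  obtain ⟨b1, b2, b3, h12, h13, h23, hW3⟩ := Finset.card_eq_three.1 hW3card
  have hb1 : b1 ∈ (N E w).erase f := hW3sub (by rw [hW3]; simp)
  have hb2 : b2 ∈ (N E w).erase f := hW3sub (by rw [hW3]; simp)
  have hb3 : b3 ∈ (N E w).erase f := hW3sub (by rw [hW3]; simp)
  -- helper contradictions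
  have hABC : ∀ ba bb bc, ba ∈ (N E w).erase f → bb ∈ (N E w).erase f →
      bc ∈ (N E w).erase f → ba ≠ bb → ba ≠ bc → bb ≠ bc → cr' ∈ ba → cp ∈ bb →
      ((cp ∈ bc ∨ cq ∈ bc) ∧ (cq' ∈ bc ∨ cr' ∈ bc)) → False := by
    intro ba bb bc hba hbb hbc nab nac nbc hra hpb hc
    obtain ⟨hc1, hc2⟩ := hc
    rcases hc1 with h | hq
    · exact huniq cp hcpw bb bc hbb hbc nbc hpb h
    · rcases hc2 with h | h
      · exact hcapq bc hbc hq h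
      · exact huniq cr' hcr'w ba bc hba hbc nac hra h
  have hCC2 : ∀ b b', b ∈ (N E w).erase f → b' ∈ (N E w).erase f → b ≠ b' →
      ((cp ∈ b ∨ cq ∈ b) ∧ (cq' ∈ b ∨ cr' ∈ b)) →
      ((cp ∈ b' ∨ cq ∈ b') ∧ (cq' ∈ b' ∨ cr' ∈ b')) →
      (cp ∈ b ∨ cp ∈ b') ∧ (cq ∈ b ∨ cq ∈ b') ∧
        (cq' ∈ b ∨ cq' ∈ b') ∧ (cr' ∈ b ∨ cr' ∈ b') := by
    intro b b' hb hb' hne hC hC'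
    obtain ⟨h1, h2⟩ := hC
    obtain ⟨h1', h2'⟩ := hC'
    refine ⟨?_, ?_, ?_, ?_⟩
    · rcases h1 with h | h
      · exact Or.inl h
      · rcases h1' with h' | h'
        · exact Or.inr h'
        · exact absurd h' (fun h'' => huniq cq hcqw b b' hb hb' hne h h'')
    · rcases h1 with h | h
      · rcases h1' with h' | h'
        · exact absurd h' (fun h'' => huniq cp hcpw b b' hb hb' hne h h'')
        · exact Or.inr h'
      · exact Or.inl h
    · rcases h2 with h | h
      · exact Or.inl h
      · rcases h2' with h' | h'
        · exact Or.inr h'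
        · exact absurd h' (fun h'' => huniq cr' hcr'w b b' hb hb' hne h h'')
    · rcases h2 with h | h
      · rcases h2' with h' | h'
        · exact absurd h' (fun h'' => huniq cq' hcq'w b b' hb hb' hne h h'')
        · exact Or.inr h'
      · exact Or.inl h
  have hCCX : ∀ b b' b'', b ∈ (N E w).erase f → b' ∈ (N E w).erase f →
      b'' ∈ (N E w).erase f → b ≠ b' → b ≠ b'' → b' ≠ b'' →
      ((cp ∈ b ∨ cq ∈ b) ∧ (cq' ∈ b ∨ cr' ∈ b)) →
      ((cp ∈ b' ∨ cq ∈ b') ∧ (cq' ∈ b' ∨ cr' ∈ b')) →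
      ((cr' ∈ b'' ∧ Disjoint g b'') ∨ (cp ∈ b'' ∧ Disjoint g' b'') ∨
        ((cp ∈ b'' ∨ cq ∈ b'') ∧ (cq' ∈ b'' ∨ cr' ∈ b''))) → False := by
    intro b b' b'' hb hb' hb'' n1 n2 n3 hC hC' hX
    obtain ⟨hcp4, hcq4, hcq'4, hcr4⟩ := hCC2 b b' hb hb' n1 hC hC'
    rcases hX with ⟨h, _⟩ | ⟨h, _⟩ | ⟨hx1, _⟩
    · rcases hcr4 with hh | hh
      · exact huniq cr' hcr'w b b'' hb hb'' n2 hh h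
      · exact huniq cr' hcr'w b' b'' hb' hb'' n3 hh h
    · rcases hcp4 with hh | hh
      · exact huniq cp hcpw b b'' hb hb'' n2 hh h
      · exact huniq cp hcpw b' b'' hb' hb'' n3 hh h
    · rcases hx1 with h | h
      · rcases hcp4 with hh | hh
        · exact huniq cp hcpw b b'' hb hb'' n2 hh h
        · exact huniq cp hcpw b' b'' hb' hb'' n3 hh h
      · rcases hcq4 with hh | hh
        · exact huniq cq hcqw b b'' hb hb'' n2 hh h
        · exact huniq cq hcqw b' b'' hb' hb'' n3 hh h
  -- final case bash
  have hcl1 := classify b1 hb1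
  have hcl2 := classify b2 hb2
  have hcl3 := classify b3 hb3
  rcases hcl1 with ⟨hA1, hA1d⟩ | ⟨hB1, hB1d⟩ | hC1 <;>
    rcases hcl2 with ⟨hA2, hA2d⟩ | ⟨hB2, hB2d⟩ | hC2 <;>
      rcases hcl3 with ⟨hA3, hA3d⟩ | ⟨hB3, hB3d⟩ | hC3 <;>
        first
          | exact huniq cr' hcr'w b1 b2 hb1 hb2 h12 hA1 hA2
          | exact huniq cr' hcr'w b1 b3 hb1 hb3 h13 hA1 hA3
          | exact huniq cr' hcr'w b2 b3 hb2 hb3 h23 hA2 hA3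
          | exact huniq cp hcpw b1 b2 hb1 hb2 h12 hB1 hB2
          | exact huniq cp hcpw b1 b3 hb1 hb3 h13 hB1 hB3
          | exact huniq cp hcpw b2 b3 hb2 hb3 h23 hB2 hB3
          | exact hCCX b1 b2 b3 hb1 hb2 hb3 h12 h13 h23 hC1 hC2 (classify b3 hb3)
          | exact hCCX b1 b3 b2 hb1 hb3 hb2 h13 h12 h23.symm hC1 hC3 (classify b2 hb2)
          | exact hCCX b2 b3 b1 hb2 hb3 hb1 h23 h12.symm h13.symm hC2 hC3 (classify b1 hb1)
          | exact hABC b1 b2 b3 hb1 hb2 hb3 h12 h13 h23 hA1 hB2 hC3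
          | exact hABC b1 b3 b2 hb1 hb3 hb2 h13 h12 h23.symm hA1 hB3 hC2
          | exact hABC b2 b1 b3 hb2 hb1 hb3 h12.symm h23 h13 hA2 hB1 hC3
          | exact hABC b3 b1 b2 hb3 hb1 hb2 h13.symm h23.symm h12 hA3 hB1 hC2
          | exact hABC b2 b3 b1 hb2 hb3 hb1 h23 h12.symm h13.symm hA2 hB3 hC1
          | exact hABC b3 b2 b1 hb3 hb2 hb1 h23.symm h13.symm h12.symm hA3 hB2 hC1

end CrownFree
namespace CrownFree

variable {V : Type*} [DecidableEq V] {E : Finset (Finset V)}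

lemma centerStructure (hlin : Linear3 E) (hcf : ¬ HasCrown E) {x : V} {f : Finset V}
    (hdx : deg E x = 5) (hfE : f ∈ E) (hxf : x ∈ f)
    (hheavy : ∀ p ∈ f, 4 ≤ deg E p) :
    ∃ t ⊆ (N E x).erase f, t.card = 2 ∧
      (∀ p ∈ f, p ≠ x → ∀ g ∈ (N E p).erase f,
        Ty E x f g = t ∨ Ty E x f g = ((N E x).erase f) \ t) ∧
      (∀ p ∈ f, p ≠ x → (∃ g ∈ (N E p).erase f, Ty E x f g = t) ∧
        (∃ g ∈ (N E p).erase f, Ty E x f g = ((N E x).erase f) \ t)) := by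
  -- decompose f = {x, u, w}
  have hce : (f.erase x).card = 2 := by
    rw [Finset.card_erase_of_mem hxf, edge_card hlin hfE]
  obtain ⟨u, w, huw, hfe⟩ := Finset.card_eq_two.1 hce
  have hu_er : u ∈ f.erase x := by rw [hfe]; simp
  have hw_er : w ∈ f.erase x := by rw [hfe]; simp
  have huf : u ∈ f := Finset.mem_of_mem_erase hu_er
  have hwf : w ∈ f := Finset.mem_of_mem_erase hw_er
  have hux : u ≠ x := (Finset.mem_erase.1 hu_er).1
  have hwx : w ≠ x := (Finset.mem_erase.1 hw_er).1
  have hdu : 4 ≤ deg E u := hheavy u huf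
  have hdw : 4 ≤ deg E w := hheavy w hwf
  have hmem_uw : ∀ p ∈ f, p ≠ x → p = u ∨ p = w := by
    intro p hp hpx
    have hper : p ∈ f.erase x := Finset.mem_erase.2 ⟨hpx, hp⟩
    rw [hfe] at hper
    simpa using hper
  -- base edge g₀ at u
  have hNu : 3 ≤ ((N E u).erase f).card := by
    rw [card_N_erase hlin hfE huf]; omega
  obtain ⟨g₀, hg₀⟩ := Finset.card_pos.1 (show 0 < ((N E u).erase f).card by omega)
  refine ⟨Ty E x f g₀, Ty_subset, ?_, ?_, ?_⟩
  · obtain ⟨h₀, hh₀, hd₀⟩ := partner hlin hfE huf hwf huw hdw hg₀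
    exact (pairFacts hlin hcf hdx hfE hxf huf hwf hux hwx huw hg₀ hh₀ hd₀).1
  · -- P1
    have P1u : ∀ g ∈ (N E u).erase f,
        Ty E x f g = Ty E x f g₀ ∨ Ty E x f g = ((N E x).erase f) \ Ty E x f g₀ :=
      fun g hg => rigidity hlin hcf hdx hfE hxf huf hwf hux hwx huw hdw hg hg₀
    have P1w : ∀ b ∈ (N E w).erase f,
        Ty E x f b = Ty E x f g₀ ∨ Ty E x f b = ((N E x).erase f) \ Ty E x f g₀ := by
      intro b hb
      obtain ⟨g, hgU, hdisj⟩ := partner hlin hfE hwf huf huw.symm hdu hb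
      have hpf := (pairFacts hlin hcf hdx hfE hxf huf hwf hux hwx huw hgU hb hdisj.symm).2.2
      rcases P1u g hgU with heq | heq
      · right; rw [hpf, heq]
      · left
        rw [hpf, heq, Finset.sdiff_sdiff_eq_self Ty_subset]
    intro p hp hpx g hg
    rcases hmem_uw p hp hpx with rfl | rfl
    · exact P1u g hg
    · exact P1w g hg
  · -- P2 : both types realized at every vertex of f other than x
    have P1 : ∀ p ∈ f, p ≠ x → ∀ g ∈ (N E p).erase f,
        Ty E x f g = Ty E x f g₀ ∨ Ty E x f g = ((N E x).erase f) \ Ty E x f g₀ := by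
      have P1u : ∀ g ∈ (N E u).erase f,
          Ty E x f g = Ty E x f g₀ ∨ Ty E x f g = ((N E x).erase f) \ Ty E x f g₀ :=
        fun g hg => rigidity hlin hcf hdx hfE hxf huf hwf hux hwx huw hdw hg hg₀
      have P1w : ∀ b ∈ (N E w).erase f,
          Ty E x f b = Ty E x f g₀ ∨ Ty E x f b = ((N E x).erase f) \ Ty E x f g₀ := by
        intro b hb
        obtain ⟨g, hgU, hdisj⟩ := partner hlin hfE hwf huf huw.symm hdu hb
        have hpf := (pairFacts hlin hcf hdx hfE hxf huf hwf hux hwx huw hgU hb hdisj.symm).2.2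
        rcases P1u g hgU with heq | heq
        · right; rw [hpf, heq]
        · left
          rw [hpf, heq, Finset.sdiff_sdiff_eq_self Ty_subset]
      intro p hp hpx g hg
      rcases hmem_uw p hp hpx with rfl | rfl
      · exact P1u g hg
      · exact P1w g hg
    -- at most two edges at p share a type
    have at_most_two : ∀ p, p ∈ f → p ≠ x → ∀ τ : Finset (Finset V), τ.Nonempty →
        τ ⊆ (N E x).erase f →
        ∀ g1 g2 g3, g1 ≠ g2 → g1 ≠ g3 → g2 ≠ g3 →
        g1 ∈ (N E p).erase f → g2 ∈ (N E p).erase f → g3 ∈ (N E p).erase f →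
        Ty E x f g1 = τ → Ty E x f g2 = τ → Ty E x f g3 = τ → False := by
      intro p hpf hpx τ hτne hτU g1 g2 g3 h12 h13 h23 hg1 hg2 hg3 hT1 hT2 hT3
      obtain ⟨fs, hfs⟩ := hτne
      have hfsU : fs ∈ (N E x).erase f := hτU hfs
      obtain ⟨hfsf, hfsN⟩ := Finset.mem_erase.1 hfsU
      obtain ⟨hfsE, hxfs⟩ := mem_N.1 hfsN
      have hpfs : p ∉ fs := by
        intro hpfs
        have hmem : p ∈ fs ∩ f := Finset.mem_inter.2 ⟨hpfs, hpf⟩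
        rw [inter_singleton hlin hfsE hfE hfsf hxfs hxf] at hmem
        exact hpx (Finset.mem_singleton.1 hmem)
      have htok : ∀ g, g ∈ (N E p).erase f → Ty E x f g = τ →
          ∃ v, v ∈ g ∧ v ∈ fs ∧ v ≠ x ∧ v ≠ p := by
        intro g hg hT
        have hfsT : fs ∈ Ty E x f g := by rw [hT]; exact hfs
        obtain ⟨v, hvg, hvfs⟩ := Finset.not_disjoint_iff.1 (mem_Ty.1 hfsT).2
        obtain ⟨hge, hgN⟩ := Finset.mem_erase.1 hg
        obtain ⟨hgE, hpg⟩ := mem_N.1 hgN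
        have hxg : x ∉ g := notMem_other hlin hfE hgE hge hpf hpg hxf hpx.symm
        exact ⟨v, hvg, hvfs, fun h => hxg (h ▸ hvg), fun h => hpfs (h ▸ hvfs)⟩
      obtain ⟨v1, hv1g, hv1fs, hv1x, hv1p⟩ := htok g1 hg1 hT1
      obtain ⟨v2, hv2g, hv2fs, hv2x, hv2p⟩ := htok g2 hg2 hT2
      obtain ⟨v3, hv3g, hv3fs, hv3x, hv3p⟩ := htok g3 hg3 hT3
      have hdist : ∀ ga gb va vb, ga ≠ gb → ga ∈ (N E p).erase f → gb ∈ (N E p).erase f →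
          va ∈ ga → vb ∈ gb → va ≠ p → va ≠ vb := by
        intro ga gb va vb hab hga hgb hva hvb hvap h
        obtain ⟨_, hgaN⟩ := Finset.mem_erase.1 hga
        obtain ⟨hgaE, hpga⟩ := mem_N.1 hgaN
        obtain ⟨_, hgbN⟩ := Finset.mem_erase.1 hgb
        obtain ⟨hgbE, hpgb⟩ := mem_N.1 hgbN
        have hmem : va ∈ ga ∩ gb := Finset.mem_inter.2 ⟨hva, h ▸ hvb⟩
        rw [inter_singleton hlin hgaE hgbE hab hpga hpgb] at hmem
        exact hvap (Finset.mem_singleton.1 hmem)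
      have d12 : v1 ≠ v2 := hdist g1 g2 v1 v2 h12 hg1 hg2 hv1g hv2g hv1p
      have d13 : v1 ≠ v3 := hdist g1 g3 v1 v3 h13 hg1 hg3 hv1g hv3g hv1p
      have d23 : v2 ≠ v3 := hdist g2 g3 v2 v3 h23 hg2 hg3 hv2g hv3g hv2p
      have hsub : ({v1, v2, v3} : Finset V) ⊆ fs.erase x := by
        intro a ha
        simp only [Finset.mem_insert, Finset.mem_singleton] at ha
        rcases ha with rfl | rfl | rfl
        · exact Finset.mem_erase.2 ⟨hv1x, hv1fs⟩
        · exact Finset.mem_erase.2 ⟨hv2x, hv2fs⟩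
        · exact Finset.mem_erase.2 ⟨hv3x, hv3fs⟩
      have hc3 : ({v1, v2, v3} : Finset V).card = 3 := by
        rw [Finset.card_insert_of_notMem (by simp [d12, d13]),
          Finset.card_insert_of_notMem (by simp [d23]), Finset.card_singleton]
      have hc2 : (fs.erase x).card = 2 := by
        rw [Finset.card_erase_of_mem hxfs, edge_card hlin hfsE]
      have := Finset.card_le_card hsub
      omega
    intro p hp hpx
    have hdp : 4 ≤ deg E p := hheavy p hp
    have hNp : 3 ≤ ((N E p).erase f).card := by
      rw [card_N_erase hlin hfE hp]; omega
    obtain ⟨P3, hP3sub, hP3card⟩ := Finset.exists_subset_card_eq hNp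
    obtain ⟨g1, g2, g3, h12, h13, h23, hP3⟩ := Finset.card_eq_three.1 hP3card
    have hg1 : g1 ∈ (N E p).erase f := hP3sub (by rw [hP3]; simp)
    have hg2 : g2 ∈ (N E p).erase f := hP3sub (by rw [hP3]; simp)
    have hg3 : g3 ∈ (N E p).erase f := hP3sub (by rw [hP3]; simp)
    have hUcard : ((N E x).erase f).card = 4 := by
      rw [card_N_erase hlin hfE hxf, hdx]
    have htcard : (Ty E x f g₀).card = 2 := by
      obtain ⟨h₀, hh₀, hd₀⟩ := partner hlin hfE huf hwf huw hdw hg₀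
      exact (pairFacts hlin hcf hdx hfE hxf huf hwf hux hwx huw hg₀ hh₀ hd₀).1
    constructor
    · by_contra hnot
      push_neg at hnot
      have hall : ∀ g ∈ (N E p).erase f,
          Ty E x f g = ((N E x).erase f) \ Ty E x f g₀ := by
        intro g hg
        rcases P1 p hp hpx g hg with heq | heq
        · exact absurd heq (hnot g hg)
        · exact heq
      have hne : (((N E x).erase f) \ Ty E x f g₀).Nonempty := by
        apply Finset.card_pos.1
        rw [Finset.card_sdiff_of_subset Ty_subset, hUcard, htcard]
        omega
      exact at_most_two p hp hpx _ hne (Finset.sdiff_subset) g1 g2 g3 h12 h13 h23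
        hg1 hg2 hg3 (hall g1 hg1) (hall g2 hg2) (hall g3 hg3)
    · by_contra hnot
      push_neg at hnot
      have hall : ∀ g ∈ (N E p).erase f, Ty E x f g = Ty E x f g₀ := by
        intro g hg
        rcases P1 p hp hpx g hg with heq | heq
        · exact heq
        · exact absurd heq (hnot g hg)
      have hne : (Ty E x f g₀).Nonempty := by
        apply Finset.card_pos.1
        omega
      exact at_most_two p hp hpx _ hne Ty_subset g1 g2 g3 h12 h13 h23
        hg1 hg2 hg3 (hall g1 hg1) (hall g2 hg2) (hall g3 hg3)

end CrownFree
namespace CrownFree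

variable {V : Type*} [DecidableEq V] {E : Finset (Finset V)}

/-- A heavy edge: all vertices have degree in [4,5]. -/
def Hvy (E : Finset (Finset V)) (e : Finset V) : Prop :=
  ∀ u ∈ e, 4 ≤ deg E u ∧ deg E u ≤ 5

instance : DecidablePred (Hvy E) := fun _ => Finset.decidableDforallFinset

lemma heavy_le_three (hlin : Linear3 E) (hcf : ¬ HasCrown E) {x : V} (hdx : deg E x = 5) :
    ((N E x).filter (Hvy E)).card ≤ 3 := by
  by_contra hcon
  push_neg at hcon
  obtain ⟨T4, hT4sub, hT4card⟩ := Finset.exists_subset_card_eq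
    (show 4 ≤ ((N E x).filter (Hvy E)).card by omega)
  have hT4Nx : T4 ⊆ N E x := hT4sub.trans (Finset.filter_subset _ _)
  have hNxcard : (N E x).card = 5 := hdx
  have hsd : ((N E x) \ T4).card = 1 := by
    rw [Finset.card_sdiff_of_subset hT4Nx, hNxcard, hT4card]
  obtain ⟨F5, hF5⟩ := Finset.card_eq_one.1 hsd
  have hF5mem : F5 ∈ (N E x) \ T4 := by rw [hF5]; simp
  have hF5N : F5 ∈ N E x := (Finset.mem_sdiff.1 hF5mem).1
  have hF5T4 : F5 ∉ T4 := (Finset.mem_sdiff.1 hF5mem).2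
  obtain ⟨hF5E, hxF5⟩ := mem_N.1 hF5N
  have hmemT4 : ∀ e', e' ∈ N E x → e' ≠ F5 → e' ∈ T4 := by
    intro e' h1 h2
    by_contra h3
    have : e' ∈ (N E x) \ T4 := Finset.mem_sdiff.2 ⟨h1, h3⟩
    rw [hF5] at this
    exact h2 (Finset.mem_singleton.1 this)
  have hHvy : ∀ e ∈ T4, Hvy E e := fun e he => (Finset.mem_filter.1 (hT4sub he)).2
  -- pick f1 ∈ T4
  obtain ⟨f1, hf1T4⟩ := Finset.card_pos.1 (show 0 < T4.card by omega)
  have hf1N : f1 ∈ N E x := hT4Nx hf1T4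
  obtain ⟨hf1E, hxf1⟩ := mem_N.1 hf1N
  have hf1H := hHvy f1 hf1T4
  have hF5f1 : F5 ≠ f1 := fun h => hF5T4 (h ▸ hf1T4)
  obtain ⟨t1, ht1U, ht1card, P11, P21⟩ :=
    centerStructure hlin hcf hdx hf1E hxf1 (fun p hp => (hf1H p hp).1)
  -- pick a vertex u of f1 other than x
  have hue : (f1.erase x).Nonempty := by
    apply Finset.card_pos.1
    rw [Finset.card_erase_of_mem hxf1, edge_card hlin hf1E]
    omega
  obtain ⟨u, hu_er⟩ := hue
  have huf1 : u ∈ f1 := Finset.mem_of_mem_erase hu_er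
  have hux : u ≠ x := (Finset.mem_erase.1 hu_er).1
  obtain ⟨⟨gt, hgt, hgtT⟩, ⟨gct, hgct, hgctT⟩⟩ := P21 u huf1 hux
  have hU1card : ((N E x).erase f1).card = 4 := by
    rw [card_N_erase hlin hf1E hxf1, hdx]
  -- choose the type s not containing F5, with witnesses gs (type s), gc (type complement)
  obtain ⟨s, gs, gc, hsU, hscard, hF5s, hgs, hgsT, hgc, hgcT⟩ :
      ∃ s gs gc, s ⊆ (N E x).erase f1 ∧ s.card = 2 ∧ F5 ∉ s ∧
        gs ∈ (N E u).erase f1 ∧ Ty E x f1 gs = s ∧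
        gc ∈ (N E u).erase f1 ∧ Ty E x f1 gc = ((N E x).erase f1) \ s := by
    by_cases hF5t1 : F5 ∈ t1
    · refine ⟨((N E x).erase f1) \ t1, gct, gt, Finset.sdiff_subset, ?_, ?_, hgct, hgctT,
        hgt, ?_⟩
      · rw [Finset.card_sdiff_of_subset ht1U, hU1card, ht1card]
      · simp [Finset.mem_sdiff, hF5t1]
      · rw [Finset.sdiff_sdiff_eq_self ht1U, hgtT]
    · exact ⟨t1, gt, gct, ht1U, ht1card, hF5t1, hgt, hgtT, hgct, hgctT⟩
  -- name the two elements of s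
  obtain ⟨fa, fb, hab, hs2⟩ := Finset.card_eq_two.1 hscard
  have hfa_s : fa ∈ s := by rw [hs2]; simp
  have hfb_s : fb ∈ s := by rw [hs2]; simp
  have hfaU1 : fa ∈ (N E x).erase f1 := hsU hfa_s
  have hfbU1 : fb ∈ (N E x).erase f1 := hsU hfb_s
  have hfa_ne_f1 : fa ≠ f1 := (Finset.mem_erase.1 hfaU1).1
  have hfb_ne_f1 : fb ≠ f1 := (Finset.mem_erase.1 hfbU1).1
  have hfaN : fa ∈ N E x := (Finset.mem_erase.1 hfaU1).2
  have hfbN : fb ∈ N E x := (Finset.mem_erase.1 hfbU1).2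
  obtain ⟨hfaE, hxfa⟩ := mem_N.1 hfaN
  obtain ⟨hfbE, hxfb⟩ := mem_N.1 hfbN
  have hfaF5 : fa ≠ F5 := fun h => hF5s (h ▸ hfa_s)
  have hfbF5 : fb ≠ F5 := fun h => hF5s (h ▸ hfb_s)
  have hfaT4 : fa ∈ T4 := hmemT4 fa hfaN hfaF5
  have hfaH := hHvy fa hfaT4
  -- the complement pair {fc, F5}
  have hF5comp : F5 ∈ ((N E x).erase f1) \ s :=
    Finset.mem_sdiff.2 ⟨Finset.mem_erase.2 ⟨hF5f1, hF5N⟩, hF5s⟩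
  have hcompcard : (((N E x).erase f1) \ s).card = 2 := by
    rw [Finset.card_sdiff_of_subset hsU, hU1card, hscard]
  have hcompe : ((((N E x).erase f1) \ s).erase F5).card = 1 := by
    rw [Finset.card_erase_of_mem hF5comp, hcompcard]
  obtain ⟨fc, hfc⟩ := Finset.card_eq_one.1 hcompe
  have hfc_mem : fc ∈ ((((N E x).erase f1) \ s).erase F5) := by
    rw [hfc]; exact Finset.mem_singleton_self fc
  have hfcF5 : fc ≠ F5 := (Finset.mem_erase.1 hfc_mem).1
  have hfc_comp : fc ∈ ((N E x).erase f1) \ s := Finset.mem_of_mem_erase hfc_mem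
  have hfcU1 : fc ∈ (N E x).erase f1 := (Finset.mem_sdiff.1 hfc_comp).1
  have hfc_ns : fc ∉ s := (Finset.mem_sdiff.1 hfc_comp).2
  have hfc_ne_f1 : fc ≠ f1 := (Finset.mem_erase.1 hfcU1).1
  have hfcN : fc ∈ N E x := (Finset.mem_erase.1 hfcU1).2
  obtain ⟨hfcE, hxfc⟩ := mem_N.1 hfcN
  have hfcfa : fc ≠ fa := fun h => hfc_ns (h ▸ hfa_s)
  have hfcfb : fc ≠ fb := fun h => hfc_ns (h ▸ hfb_s)
  have hfcT4 : fc ∈ T4 := hmemT4 fc hfcN hfcF5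
  have hfcH := hHvy fc hfcT4
  have hcomp_eq : ((N E x).erase f1) \ s = {F5, fc} := by
    rw [← Finset.insert_erase hF5comp, hfc]
  -- basic facts about gs and gc
  obtain ⟨hgse, hgsN⟩ := Finset.mem_erase.1 hgs
  obtain ⟨hgsE, hugs⟩ := mem_N.1 hgsN
  obtain ⟨hgce, hgcN⟩ := Finset.mem_erase.1 hgc
  obtain ⟨hgcE, hugc⟩ := mem_N.1 hgcN
  have hxgs : x ∉ gs := notMem_other hlin hf1E hgsE hgse huf1 hugs hxf1 hux.symm
  have hxgc : x ∉ gc := notMem_other hlin hf1E hgcE hgce huf1 hugc hxf1 hux.symm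
  -- meet/disjointness facts about gs
  have hgs_fa : ¬ Disjoint gs fa := by
    have : fa ∈ Ty E x f1 gs := by rw [hgsT]; exact hfa_s
    exact (mem_Ty.1 this).2
  have hgs_fb : ¬ Disjoint gs fb := by
    have : fb ∈ Ty E x f1 gs := by rw [hgsT]; exact hfb_s
    exact (mem_Ty.1 this).2
  have hgs_dis : ∀ f', f' ∈ N E x → f' ≠ f1 → f' ∉ s → Disjoint gs f' := by
    intro f' h1 h2 h3
    by_contra hd
    have : f' ∈ Ty E x f1 gs := mem_Ty.2 ⟨⟨h2, h1⟩, hd⟩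
    rw [hgsT] at this
    exact h3 this
  have hgs_fc : Disjoint gs fc := hgs_dis fc hfcN hfc_ne_f1 hfc_ns
  have hgs_F5 : Disjoint gs F5 := hgs_dis F5 hF5N hF5f1 hF5s
  have hgs_f1 : ¬ Disjoint gs f1 := Finset.not_disjoint_iff.2 ⟨u, hugs, huf1⟩
  -- meet/disjointness facts about gc
  have hgc_fc : ¬ Disjoint gc fc := by
    have : fc ∈ Ty E x f1 gc := by rw [hgcT]; exact hfc_comp
    exact (mem_Ty.1 this).2
  have hgc_F5 : ¬ Disjoint gc F5 := by
    have : F5 ∈ Ty E x f1 gc := by rw [hgcT]; exact hF5comp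
    exact (mem_Ty.1 this).2
  have hgc_dis : ∀ f', f' ∈ N E x → f' ≠ f1 → f' ∉ ((N E x).erase f1) \ s →
      Disjoint gc f' := by
    intro f' h1 h2 h3
    by_contra hd
    have : f' ∈ Ty E x f1 gc := mem_Ty.2 ⟨⟨h2, h1⟩, hd⟩
    rw [hgcT] at this
    exact h3 this
  have hgc_fa : Disjoint gc fa :=
    hgc_dis fa hfaN hfa_ne_f1 (fun h => (Finset.mem_sdiff.1 h).2 hfa_s)
  have hgc_fb : Disjoint gc fb :=
    hgc_dis fb hfbN hfb_ne_f1 (fun h => (Finset.mem_sdiff.1 h).2 hfb_s)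
  have hgc_f1 : ¬ Disjoint gc f1 := Finset.not_disjoint_iff.2 ⟨u, hugc, huf1⟩
  -- enumeration of N E x
  have hNx_eq : N E x = {f1, fa, fb, fc, F5} := by
    symm
    apply Finset.eq_of_subset_of_card_le
    · intro a ha
      simp only [Finset.mem_insert, Finset.mem_singleton] at ha
      rcases ha with rfl | rfl | rfl | rfl | rfl <;> assumption
    · rw [hNxcard]
      rw [Finset.card_insert_of_notMem (by simp [Ne.symm hfa_ne_f1, Ne.symm hfb_ne_f1,
          Ne.symm hfc_ne_f1, Ne.symm hF5f1]),
        Finset.card_insert_of_notMem (by simp [hab, Ne.symm hfcfa, hfaF5]),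
        Finset.card_insert_of_notMem (by simp [Ne.symm hfcfb, hfbF5]),
        Finset.card_insert_of_notMem (by simp [hfcF5]), Finset.card_singleton]
  have hNx_cases : ∀ f', f' ∈ N E x → f' = f1 ∨ f' = fa ∨ f' = fb ∨ f' = fc ∨ f' = F5 := by
    intro f' h
    rw [hNx_eq] at h
    simpa using h
  -- compute Ty of gs at center fa
  have hTyA : Ty E x fa gs = {f1, fb} := by
    apply Finset.Subset.antisymm
    · intro f' hf'
      obtain ⟨⟨hne, hN⟩, hnd⟩ := mem_Ty.1 hf'
      rcases hNx_cases f' hN with rfl | rfl | rfl | rfl | rfl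
      · simp
      · exact absurd rfl hne
      · simp
      · exact (hnd hgs_fc).elim
      · exact (hnd hgs_F5).elim
    · intro f' hf'
      simp only [Finset.mem_insert, Finset.mem_singleton] at hf'
      rcases hf' with rfl | rfl
      · exact mem_Ty.2 ⟨⟨Ne.symm hfa_ne_f1, hf1N⟩, hgs_f1⟩
      · exact mem_Ty.2 ⟨⟨Ne.symm hab, hfbN⟩, hgs_fb⟩
  -- the complement of {f1, fb} at center fa is {fc, F5}
  have hUa_sdiff : ((N E x).erase fa) \ {f1, fb} = {fc, F5} := by
    apply Finset.Subset.antisymm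
    · intro f' h
      obtain ⟨h1, h2⟩ := Finset.mem_sdiff.1 h
      obtain ⟨hnefa, hN⟩ := Finset.mem_erase.1 h1
      rcases hNx_cases f' hN with rfl | rfl | rfl | rfl | rfl
      · exact (h2 (by simp)).elim
      · exact absurd rfl hnefa
      · exact (h2 (by simp)).elim
      · simp
      · simp
    · intro f' h
      simp only [Finset.mem_insert, Finset.mem_singleton] at h
      rcases h with rfl | rfl
      · exact Finset.mem_sdiff.2 ⟨Finset.mem_erase.2 ⟨hfcfa, hfcN⟩,
          by simp [hfc_ne_f1, hfcfb]⟩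
      · exact Finset.mem_sdiff.2 ⟨Finset.mem_erase.2 ⟨Ne.symm hfaF5, hF5N⟩,
          by simp [hF5f1, Ne.symm hfbF5]⟩
  -- pick va, the vertex where gs meets fa
  obtain ⟨va, hva_gs, hva_fa⟩ := Finset.not_disjoint_iff.1 hgs_fa
  have hvax : va ≠ x := fun h => hxgs (h ▸ hva_gs)
  have hgs_ne_fa : gs ≠ fa := fun h => hxgs (h ▸ hxfa)
  have hgs_in_a : gs ∈ (N E va).erase fa :=
    Finset.mem_erase.2 ⟨hgs_ne_fa, mem_N.2 ⟨hgsE, hva_gs⟩⟩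
  -- center structure at fa
  obtain ⟨ta, htaU, htacard, P1a, P2a⟩ :=
    centerStructure hlin hcf hdx hfaE hxfa (fun p hp => (hfaH p hp).1)
  -- get g₂ at va with type {fc, F5} w.r.t. center fa
  obtain ⟨g₂, hg₂in, hg₂T⟩ : ∃ g₂ ∈ (N E va).erase fa, Ty E x fa g₂ = {fc, F5} := by
    rcases P1a va hva_fa hvax gs hgs_in_a with heq | heq
    · obtain ⟨g₂, hg₂, hg₂T⟩ := (P2a va hva_fa hvax).2
      refine ⟨g₂, hg₂, ?_⟩
      rw [hg₂T, ← heq, hTyA, hUa_sdiff]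
    · obtain ⟨g₂, hg₂, hg₂T⟩ := (P2a va hva_fa hvax).1
      have hta : ta = ((N E x).erase fa) \ Ty E x fa gs := by
        rw [heq]
        exact (Finset.sdiff_sdiff_eq_self htaU).symm
      refine ⟨g₂, hg₂, ?_⟩
      rw [hg₂T, hta, hTyA, hUa_sdiff]
  obtain ⟨hg₂e, hg₂N⟩ := Finset.mem_erase.1 hg₂in
  obtain ⟨hg₂E, hvag₂⟩ := mem_N.1 hg₂N
  have hxg₂ : x ∉ g₂ := notMem_other hlin hfaE hg₂E hg₂e hva_fa hvag₂ hxfa hvax.symm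
  -- meet/disjointness facts about g₂ w.r.t. center fa
  have hg₂_fc : ¬ Disjoint g₂ fc := by
    have : fc ∈ Ty E x fa g₂ := by rw [hg₂T]; simp
    exact (mem_Ty.1 this).2
  have hg₂_F5 : ¬ Disjoint g₂ F5 := by
    have : F5 ∈ Ty E x fa g₂ := by rw [hg₂T]; simp
    exact (mem_Ty.1 this).2
  have hg₂_dis : ∀ f', f' ∈ N E x → f' ≠ fa → f' ∉ ({fc, F5} : Finset (Finset V)) →
      Disjoint g₂ f' := by
    intro f' h1 h2 h3
    by_contra hd
    have : f' ∈ Ty E x fa g₂ := mem_Ty.2 ⟨⟨h2, h1⟩, hd⟩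
    rw [hg₂T] at this
    exact h3 this
  have hg₂_f1 : Disjoint g₂ f1 :=
    hg₂_dis f1 hf1N (Ne.symm hfa_ne_f1) (by simp [Ne.symm hfc_ne_f1, Ne.symm hF5f1])
  have hg₂_fb : Disjoint g₂ fb :=
    hg₂_dis fb hfbN (Ne.symm hab) (by simp [Ne.symm hfcfb, hfbF5])
  have hg₂_fa : ¬ Disjoint g₂ fa := Finset.not_disjoint_iff.2 ⟨va, hvag₂, hva_fa⟩
  -- vertices where g₂ and gc meet fc
  obtain ⟨vc2, hvc2_g₂, hvc2_fc⟩ := Finset.not_disjoint_iff.1 hg₂_fc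
  have hvc2x : vc2 ≠ x := fun h => hxg₂ (h ▸ hvc2_g₂)
  obtain ⟨vcg, hvcg_gc, hvcg_fc⟩ := Finset.not_disjoint_iff.1 hgc_fc
  have hvcgx : vcg ≠ x := fun h => hxgc (h ▸ hvcg_gc)
  -- center structure at fc
  obtain ⟨tc, htcU, htccard, P1c, P2c⟩ :=
    centerStructure hlin hcf hdx hfcE hxfc (fun p hp => (hfcH p hp).1)
  have hg₂_ne_fc : g₂ ≠ fc := fun h => hxg₂ (h ▸ hxfc)
  have hg₂_in_c : g₂ ∈ (N E vc2).erase fc :=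
    Finset.mem_erase.2 ⟨hg₂_ne_fc, mem_N.2 ⟨hg₂E, hvc2_g₂⟩⟩
  have hgc_ne_fc : gc ≠ fc := fun h => hxgc (h ▸ hxfc)
  have hgc_in_c : gc ∈ (N E vcg).erase fc :=
    Finset.mem_erase.2 ⟨hgc_ne_fc, mem_N.2 ⟨hgcE, hvcg_gc⟩⟩
  -- compute Ty of g₂ at center fc
  have hTyC2 : Ty E x fc g₂ = {fa, F5} := by
    apply Finset.Subset.antisymm
    · intro f' hf'
      obtain ⟨⟨hne, hN⟩, hnd⟩ := mem_Ty.1 hf'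
      rcases hNx_cases f' hN with rfl | rfl | rfl | rfl | rfl
      · exact (hnd hg₂_f1).elim
      · simp
      · exact (hnd hg₂_fb).elim
      · exact absurd rfl hne
      · simp
    · intro f' hf'
      simp only [Finset.mem_insert, Finset.mem_singleton] at hf'
      rcases hf' with rfl | rfl
      · exact mem_Ty.2 ⟨⟨Ne.symm hfcfa, hfaN⟩, hg₂_fa⟩
      · exact mem_Ty.2 ⟨⟨Ne.symm hfcF5, hF5N⟩, hg₂_F5⟩
  -- compute Ty of gc at center fc
  have hTyCg : Ty E x fc gc = {f1, F5} := by
    apply Finset.Subset.antisymm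
    · intro f' hf'
      obtain ⟨⟨hne, hN⟩, hnd⟩ := mem_Ty.1 hf'
      rcases hNx_cases f' hN with rfl | rfl | rfl | rfl | rfl
      · simp
      · exact (hnd hgc_fa).elim
      · exact (hnd hgc_fb).elim
      · exact absurd rfl hne
      · simp
    · intro f' hf'
      simp only [Finset.mem_insert, Finset.mem_singleton] at hf'
      rcases hf' with rfl | rfl
      · exact mem_Ty.2 ⟨⟨Ne.symm hfc_ne_f1, hf1N⟩, hgc_f1⟩
      · exact mem_Ty.2 ⟨⟨Ne.symm hfcF5, hF5N⟩, hgc_F5⟩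
  -- final contradiction
  have hF5_1 : F5 ∈ Ty E x fc g₂ := by rw [hTyC2]; simp
  have hF5_2 : F5 ∈ Ty E x fc gc := by rw [hTyCg]; simp
  have hne12 : Ty E x fc g₂ ≠ Ty E x fc gc := by
    rw [hTyC2, hTyCg]
    intro h
    have hmem : fa ∈ ({f1, F5} : Finset (Finset V)) := by rw [← h]; simp
    rcases Finset.mem_insert.1 hmem with h' | h'
    · exact hfa_ne_f1 h'
    · exact hfaF5 (Finset.mem_singleton.1 h')
  rcases P1c vc2 hvc2_fc hvc2x g₂ hg₂_in_c with h1 | h1 <;>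
    rcases P1c vcg hvcg_fc hvcgx gc hgc_in_c with h2 | h2
  · exact hne12 (h1.trans h2.symm)
  · rw [h1] at hF5_1
    rw [h2] at hF5_2
    exact (Finset.mem_sdiff.1 hF5_2).2 hF5_1
  · rw [h1] at hF5_1
    rw [h2] at hF5_2
    exact (Finset.mem_sdiff.1 hF5_1).2 hF5_2
  · exact hne12 (h1.trans h2.symm)

end CrownFree
namespace CrownFree

variable {V : Type*} [DecidableEq V] {E : Finset (Finset V)}

/-- Payment of vertex v on edge e. -/
def pay (E : Finset (Finset V)) (e : Finset V) (v : V) : ℚ :=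
  if Hvy E e then 20
  else if 6 ≤ deg E v then 0
  else if 4 ≤ deg E v then 15
  else if 2 ≤ deg E v then 30
  else 60

lemma pay_nonneg (e : Finset V) (v : V) : 0 ≤ pay E e v := by
  unfold pay
  split_ifs <;> norm_num

lemma pay_of_heavy {e : Finset V} (v : V) (h : Hvy E e) : pay E e v = 20 := by
  simp [pay, h]

lemma pay_big {e : Finset V} {v : V} (hH : ¬ Hvy E e) (h : 6 ≤ deg E v) :
    pay E e v = 0 := by
  unfold pay
  rw [if_neg hH, if_pos h]

lemma pay_med {e : Finset V} {v : V} (hH : ¬ Hvy E e) (h4 : 4 ≤ deg E v)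
    (h5 : deg E v ≤ 5) : pay E e v = 15 := by
  unfold pay
  rw [if_neg hH, if_neg (by omega), if_pos h4]

lemma pay_small {e : Finset V} {v : V} (hH : ¬ Hvy E e) (h2 : 2 ≤ deg E v)
    (h3 : deg E v ≤ 3) : pay E e v = 30 := by
  unfold pay
  rw [if_neg hH, if_neg (by omega), if_neg (by omega), if_pos h2]

lemma pay_one {e : Finset V} {v : V} (hH : ¬ Hvy E e) (h1 : deg E v ≤ 1) :
    pay E e v = 60 := by
  unfold pay
  rw [if_neg hH, if_neg (by omega), if_neg (by omega), if_neg (by omega)]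

lemma third_vertex {e : Finset V} {x y z : V} (hxy : x ≠ y) (hxz : x ≠ z) (hyz : y ≠ z)
    (hexyz : e = {x, y, z}) {v a : V} (hv : v ∈ e) (ha : a ∈ e) (hva : v ≠ a) :
    ∃ b ∈ e, b ≠ v ∧ b ≠ a := by
  subst hexyz
  simp only [Finset.mem_insert, Finset.mem_singleton] at hv ha
  rcases hv with rfl | rfl | rfl <;> rcases ha with rfl | rfl | rfl
  · exact absurd rfl hva
  · exact ⟨z, by simp, Ne.symm hxz, Ne.symm hyz⟩
  · exact ⟨y, by simp, Ne.symm hxy, hyz⟩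
  · exact ⟨z, by simp, Ne.symm hyz, Ne.symm hxz⟩
  · exact absurd rfl hva
  · exact ⟨x, by simp, hxy, hxz⟩
  · exact ⟨y, by simp, hyz, Ne.symm hxy⟩
  · exact ⟨x, by simp, hxz, hxy⟩
  · exact absurd rfl hva

lemma edge_pay (hlin : Linear3 E) (hcf : ¬ HasCrown E) {e : Finset V} (he : e ∈ E) :
    (60 : ℚ) ≤ ∑ v ∈ e, pay E e v := by
  obtain ⟨x, y, z, hxy, hxz, hyz, hexyz⟩ := Finset.card_eq_three.1 (edge_card hlin he)
  have hx : x ∈ e := by rw [hexyz]; simp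
  have hy : y ∈ e := by rw [hexyz]; simp
  have hz : z ∈ e := by rw [hexyz]; simp
  have hsum : ∑ v ∈ e, pay E e v = pay E e x + pay E e y + pay E e z := by
    rw [hexyz, Finset.sum_insert (by simp [hxy, hxz]),
      Finset.sum_insert (by simp [hyz]), Finset.sum_singleton]
    ring
  rw [hsum]
  by_cases hH : Hvy E e
  · rw [pay_of_heavy x hH, pay_of_heavy y hH, pay_of_heavy z hH]
    norm_num
  · by_cases h1 : ∃ v ∈ e, deg E v ≤ 1
    · obtain ⟨v, hv, hv1⟩ := h1
      have h60 : pay E e v = 60 := pay_one hH hv1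
      have hv3 : v = x ∨ v = y ∨ v = z := by rw [hexyz] at hv; simpa using hv
      have p1 := pay_nonneg (E := E) e x
      have p2 := pay_nonneg (E := E) e y
      have p3 := pay_nonneg (E := E) e z
      rcases hv3 with rfl | rfl | rfl <;> linarith
    · push_neg at h1
      by_cases h6 : ∃ v ∈ e, 6 ≤ deg E v
      · obtain ⟨v, hv, hv6⟩ := h6
        have hother : ∀ a ∈ e, a ≠ v → deg E a ≤ 3 := by
          intro a ha hav
          by_contra hcon4
          push_neg at hcon4
          obtain ⟨b, hb, hbv, hba⟩ := third_vertex hxy hxz hyz hexyz hv ha hav.symm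
          exact fact1 hlin hcf he hv ha hb hav.symm hbv.symm hba.symm hv6
            (by omega) (by have := h1 b hb; omega)
        have hpay30 : ∀ a ∈ e, a ≠ v → pay E e a = 30 := fun a ha hav =>
          pay_small hH (by have := h1 a ha; omega) (hother a ha hav)
        have hv3 : v = x ∨ v = y ∨ v = z := by rw [hexyz] at hv; simpa using hv
        have p1 := pay_nonneg (E := E) e x
        have p2 := pay_nonneg (E := E) e y
        have p3 := pay_nonneg (E := E) e z
        rcases hv3 with rfl | rfl | rfl
        · rw [hpay30 y hy (Ne.symm hxy), hpay30 z hz (Ne.symm hxz)]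
          linarith
        · rw [hpay30 x hx hxy, hpay30 z hz (Ne.symm hyz)]
          linarith
        · rw [hpay30 x hx hxz, hpay30 y hy hyz]
          linarith
      · push_neg at h6
        have h5 : ∀ v ∈ e, deg E v ≤ 5 := fun v hv => by have := h6 v hv; omega
        obtain ⟨v, hv, hv3d⟩ : ∃ v ∈ e, deg E v ≤ 3 := by
          by_contra hcon
          push_neg at hcon
          exact hH (fun a ha => ⟨by have := hcon a ha; omega, h5 a ha⟩)
        have hpv : pay E e v = 30 := pay_small hH (by have := h1 v hv; omega) hv3d
        have hothers : ∀ a ∈ e, 15 ≤ pay E e a := by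
          intro a ha
          by_cases h4 : 4 ≤ deg E a
          · rw [pay_med hH h4 (h5 a ha)]
          · rw [pay_small hH (by have := h1 a ha; omega) (by omega)]
            norm_num
        have hv3 : v = x ∨ v = y ∨ v = z := by rw [hexyz] at hv; simpa using hv
        have q1 := hothers x hx
        have q2 := hothers y hy
        have q3 := hothers z hz
        rcases hv3 with rfl | rfl | rfl <;> linarith

lemma vertex_pay (hlin : Linear3 E) (hcf : ¬ HasCrown E) (v : V) :
    ∑ e ∈ N E v, pay E e v ≤ 90 * chi E v := by
  have hcard : (N E v).card = deg E v := rfl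
  by_cases h6 : 6 ≤ deg E v
  · have hchi : chi E v = 0 := by unfold chi; rw [if_neg (by omega)]
    have hz : ∀ e ∈ N E v, pay E e v = 0 := by
      intro e he
      have hvE : v ∈ e := (mem_N.1 he).2
      have hH : ¬ Hvy E e := fun h => by have := (h v hvE).2; omega
      exact pay_big hH h6
    rw [Finset.sum_congr rfl hz, hchi]
    simp
  · have hchi : chi E v = 1 := by unfold chi; rw [if_pos (by omega)]
    rw [hchi, mul_one]
    by_cases h5 : deg E v = 5
    · have hsplit := Finset.sum_filter_add_sum_filter_not (N E v) (Hvy E)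
        (fun e => pay E e v)
      have hcard3 := heavy_le_three hlin hcf h5
      have hcards := Finset.card_filter_add_card_filter_not
        (s := N E v) (p := Hvy E)
      have hsum1 : ∑ e ∈ (N E v).filter (Hvy E), pay E e v
          ≤ ((N E v).filter (Hvy E)).card • (20 : ℚ) :=
        Finset.sum_le_card_nsmul _ _ _ (fun e heq =>
          le_of_eq (pay_of_heavy v (Finset.mem_filter.1 heq).2))
      have hsum2 : ∑ e ∈ (N E v).filter (fun e => ¬ Hvy E e), pay E e v
          ≤ ((N E v).filter (fun e => ¬ Hvy E e)).card • (15 : ℚ) :=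
        Finset.sum_le_card_nsmul _ _ _ (fun e heq =>
          le_of_eq (pay_med (Finset.mem_filter.1 heq).2 (by omega) (by omega)))
      rw [← hsplit]
      have e1 : (((N E v).filter (Hvy E)).card : ℚ) ≤ 3 := by exact_mod_cast hcard3
      have e2 : (((N E v).filter (Hvy E)).card : ℚ)
          + (((N E v).filter (fun e => ¬ Hvy E e)).card : ℚ) = 5 := by
        have : ((N E v).filter (Hvy E)).card
            + ((N E v).filter (fun e => ¬ Hvy E e)).card = 5 := by
          rw [hcards, hcard, h5]
        exact_mod_cast this
      rw [nsmul_eq_mul] at hsum1 hsum2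
      linarith
    · by_cases h4 : 4 ≤ deg E v
      · have hble : ∀ e ∈ N E v, pay E e v ≤ 20 := by
          intro e he
          by_cases hH : Hvy E e
          · rw [pay_of_heavy v hH]
          · rw [pay_med hH h4 (by omega)]
            norm_num
        have := Finset.sum_le_card_nsmul (N E v) (fun e => pay E e v) 20 hble
        rw [nsmul_eq_mul, hcard] at this
        have hd4 : (deg E v : ℚ) ≤ 4 := by
          have : deg E v ≤ 4 := by omega
          exact_mod_cast this
        nlinarith
      · have hH : ∀ e ∈ N E v, ¬ Hvy E e := by
          intro e he h
          have := (h v (mem_N.1 he).2).1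
          omega
        by_cases h2 : 2 ≤ deg E v
        · have hble : ∀ e ∈ N E v, pay E e v ≤ 30 := fun e he =>
            le_of_eq (pay_small (hH e he) h2 (by omega))
          have := Finset.sum_le_card_nsmul (N E v) (fun e => pay E e v) 30 hble
          rw [nsmul_eq_mul, hcard] at this
          have hd3 : (deg E v : ℚ) ≤ 3 := by
            have : deg E v ≤ 3 := by omega
            exact_mod_cast this
          nlinarith
        · have hble : ∀ e ∈ N E v, pay E e v ≤ 60 := fun e he =>
            le_of_eq (pay_one (hH e he) (by omega))
          have := Finset.sum_le_card_nsmul (N E v) (fun e => pay E e v) 60 hble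
          rw [nsmul_eq_mul, hcard] at this
          have hd1 : (deg E v : ℚ) ≤ 1 := by
            have : deg E v ≤ 1 := by omega
            exact_mod_cast this
          nlinarith

end CrownFree

theorem stmt_9 {V : Type*} [Fintype V] [DecidableEq V] (E : Finset (Finset V))
    (hlin : Linear3 E) (hcf : ¬ HasCrown E) :
    (E.card : ℚ) ≤ 3 * ((Fintype.card V : ℚ) -
      ((Finset.univ.filter fun v : V => 6 ≤ deg E v).card : ℚ)) / 2 := by
  classical
  open CrownFree in
  have h1 : (60 : ℚ) * E.card ≤ ∑ e ∈ E, ∑ v ∈ e, CrownFree.pay E e v := by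
    calc (60 : ℚ) * E.card = ∑ _e ∈ E, (60 : ℚ) := by
          rw [Finset.sum_const, nsmul_eq_mul]; ring
    _ ≤ _ := Finset.sum_le_sum (fun e he => CrownFree.edge_pay hlin hcf he)
  have h2 : ∑ e ∈ E, ∑ v ∈ e, CrownFree.pay E e v
      = ∑ v ∈ (Finset.univ : Finset V), ∑ e ∈ CrownFree.N E v, CrownFree.pay E e v := by
    have step1 : ∀ e ∈ E, ∑ v ∈ e, CrownFree.pay E e v
        = ∑ v ∈ (Finset.univ : Finset V), if v ∈ e then CrownFree.pay E e v else 0 := by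
      intro e _
      rw [Finset.sum_ite_mem, Finset.univ_inter]
    rw [Finset.sum_congr rfl step1, Finset.sum_comm]
    apply Finset.sum_congr rfl
    intro v _
    rw [CrownFree.N, ← Finset.sum_filter]
  have h3 : ∑ v ∈ (Finset.univ : Finset V), ∑ e ∈ CrownFree.N E v, CrownFree.pay E e v
      ≤ ∑ v ∈ (Finset.univ : Finset V), 90 * chi E v :=
    Finset.sum_le_sum (fun v _ => CrownFree.vertex_pay hlin hcf v)
  have h4 : ∑ v ∈ (Finset.univ : Finset V), chi E v
      = ((Finset.univ.filter fun v : V => deg E v ≤ 5).card : ℚ) := by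
    unfold chi
    rw [Finset.sum_boole]
  have h5 : (Finset.univ.filter fun v : V => deg E v ≤ 5).card
      + (Finset.univ.filter fun v : V => 6 ≤ deg E v).card = Fintype.card V := by
    have hfe : (Finset.univ.filter fun v : V => deg E v ≤ 5)
        = (Finset.univ.filter fun v : V => ¬ 6 ≤ deg E v) := by
      apply Finset.filter_congr
      intro v _
      constructor
      · intro h; omega
      · intro h; omega
    rw [hfe, add_comm, Finset.card_filter_add_card_filter_not, Finset.card_univ]
  have h6 : ∑ v ∈ (Finset.univ : Finset V), 90 * chi E v
      = 90 * ((Finset.univ.filter fun v : V => deg E v ≤ 5).card : ℚ) := by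
    rw [← Finset.mul_sum, h4]
  have hL : ((Finset.univ.filter fun v : V => deg E v ≤ 5).card : ℚ)
      = (Fintype.card V : ℚ) - ((Finset.univ.filter fun v : V => 6 ≤ deg E v).card : ℚ) := by
    have := h5
    have hcast : ((Finset.univ.filter fun v : V => deg E v ≤ 5).card : ℚ)
        + ((Finset.univ.filter fun v : V => 6 ≤ deg E v).card : ℚ) = (Fintype.card V : ℚ) := by
      exact_mod_cast this
    linarith
  have hfinal : (60 : ℚ) * E.card ≤ 90 * ((Fintype.card V : ℚ)
      - ((Finset.univ.filter fun v : V => 6 ≤ deg E v).card : ℚ)) := by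
    calc (60 : ℚ) * E.card ≤ _ := h1
    _ = _ := h2
    _ ≤ _ := h3
    _ = _ := h6
    _ = _ := by rw [hL]
  linarith
end

section
/- Let G be a linear 3-graph with m edges on n vertices (no isolated vertices) with at most 2 vertices of degree ≥ 6, s of them. Assign to each incidence (v, e) with v ∈ e the weight χ(v,e)/deg(v), where χ(v,e) = 0 if deg(v) ≥ 6; χ(v,e) = 1 if deg(v) ∈ {1,2,4,5}; and if deg(v) = 3, χ(v,e) = 1.05 when e contains a vertex of degree ≥ 6 and χ(v,e) = 0.9 otherwise. Then the total weight ∑_{e ∈ E} ∑_{v ∈ e} χ(v,e)/deg(v) is at most n - s. -/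
open Finset

/-- The weight χ(v,e): 0 if deg v ≥ 6; for deg v = 3 it is 1.05 if e contains a vertex of
    degree ≥ 6 and 0.9 otherwise; and 1 in all other cases (deg v ∈ {1,2,4,5}). -/
def chi2 {V : Type*} [DecidableEq V] (E : Finset (Finset V)) (e : Finset V) (v : V) : ℚ :=
  if 6 ≤ deg E v then 0
  else if deg E v = 3 then (if ∃ u ∈ e, 6 ≤ deg E u then 21/20 else 9/10)
  else 1


/-!
Count the weight vertex by vertex: `v` receives `∑_{e ∋ v} χ(v,e) / deg v`, which is `0` when
`deg v ≥ 6` and otherwise at most `1`. Only `deg v = 3` needs an argument: by linearity two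
edges through `v` share no other vertex, so at most two of them contain one of the at most two
vertices of degree `≥ 6`, and `(2 · 1.05 + 0.9) / 3 = 1`.
-/

theorem sum_sum_mem_comm {V M : Type*} [Fintype V] [DecidableEq V] [AddCommMonoid M]
    (E : Finset (Finset V)) (f : Finset V → V → M) :
    ∑ e ∈ E, ∑ v ∈ e, f e v = ∑ v, ∑ e ∈ E.filter (fun e => v ∈ e), f e v :=
  sum_comm' fun e v => by simp

theorem eq_of_two_common_vertices {V : Type*} [DecidableEq V]
    {E : Finset (Finset V)} (hlin : ∀ e ∈ E, ∀ f ∈ E, e ≠ f → (e ∩ f).card ≤ 1)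
    {e f : Finset V} (he : e ∈ E) (hf : f ∈ E) {u v : V} (huv : u ≠ v)
    (hue : u ∈ e) (hve : v ∈ e) (huf : u ∈ f) (hvf : v ∈ f) : e = f := by
  by_contra hne
  exact (hlin e he f hf hne).not_gt <|
    one_lt_card_iff.2 ⟨u, v, mem_inter.2 ⟨hue, huf⟩, mem_inter.2 ⟨hve, hvf⟩, huv⟩

theorem card_filter_exists_mem_le {V : Type*} [Fintype V] [DecidableEq V]
    {E : Finset (Finset V)} (hlin : ∀ e ∈ E, ∀ f ∈ E, e ≠ f → (e ∩ f).card ≤ 1)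
    (p : V → Prop) [DecidablePred p] {v : V} (hv : ¬ p v) :
    ((E.filter fun e => v ∈ e).filter fun e => ∃ u ∈ e, p u).card
      ≤ (univ.filter p).card := by
  refine card_le_card_of_forall_subsingleton (fun e u => u ∈ e) ?_ ?_
  · intro e he
    obtain ⟨u, hue, hu⟩ := (mem_filter.1 he).2
    exact ⟨u, by simpa using hu, hue⟩
  · intro u hu e₁ ⟨he₁, hue₁⟩ e₂ ⟨he₂, hue₂⟩
    simp only [mem_filter] at he₁ he₂
    have huv : u ≠ v := fun h => hv (h ▸ (mem_filter.1 hu).2)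
    exact eq_of_two_common_vertices hlin he₁.1.1 he₂.1.1 huv
      hue₁ he₁.1.2 hue₂ he₂.1.2

theorem sum_chi2_le_deg {V : Type*} [Fintype V] [DecidableEq V] {E : Finset (Finset V)}
    (hlin : ∀ e ∈ E, ∀ f ∈ E, e ≠ f → (e ∩ f).card ≤ 1)
    (hs : (univ.filter fun v : V => 6 ≤ deg E v).card ≤ 2) (v : V) :
    ∑ e ∈ E.filter (fun e => v ∈ e), chi2 E e v ≤ deg E v := by
  by_cases h6 : 6 ≤ deg E v
  · simp [chi2, h6]
  by_cases h3 : deg E v = 3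
  · have hval : ∀ e ∈ E.filter (fun e => v ∈ e),
        chi2 E e v = if ∃ u ∈ e, 6 ≤ deg E u then 21 / 20 else 9 / 10 := fun e _ => by
      simp [chi2, h3]
    have hheavy : (((E.filter fun e => v ∈ e).filter fun e => ∃ u ∈ e, 6 ≤ deg E u).card : ℚ)
        ≤ 2 := by
      exact_mod_cast (card_filter_exists_mem_le hlin (fun u => 6 ≤ deg E u) h6).trans hs
    have hsplit : (((E.filter fun e => v ∈ e).filter fun e => ∃ u ∈ e, 6 ≤ deg E u).card : ℚ)
        + (((E.filter fun e => v ∈ e).filter fun e => ¬ ∃ u ∈ e, 6 ≤ deg E u).card : ℚ) = 3 := by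
      exact_mod_cast (card_filter_add_card_filter_not _).trans h3
    rw [sum_congr rfl hval, sum_ite, sum_const, sum_const, h3,
      nsmul_eq_mul, nsmul_eq_mul]
    linarith
  · have hone : ∀ e ∈ E.filter (fun e => v ∈ e), chi2 E e v = 1 := fun e _ => by
      simp [chi2, h6, h3]
    simp [sum_congr rfl hone, deg]

theorem sum_chi2_div_deg_le {V : Type*} [Fintype V] [DecidableEq V] {E : Finset (Finset V)}
    (hlin : ∀ e ∈ E, ∀ f ∈ E, e ≠ f → (e ∩ f).card ≤ 1)
    (hs : (univ.filter fun v : V => 6 ≤ deg E v).card ≤ 2) (v : V) :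
    ∑ e ∈ E.filter (fun e => v ∈ e), chi2 E e v / (deg E v : ℚ)
      ≤ 1 - if 6 ≤ deg E v then 1 else 0 := by
  rw [← sum_div]
  by_cases h6 : 6 ≤ deg E v
  · simp [chi2, h6]
  · rw [if_neg h6, sub_zero]
    exact div_le_one_of_le₀ (sum_chi2_le_deg hlin hs v) (Nat.cast_nonneg _)

theorem stmt_12_general {V : Type*} [Fintype V] [DecidableEq V] (E : Finset (Finset V))
    (hlin : Linear3 E)
    (hs : (Finset.univ.filter fun v : V => 6 ≤ deg E v).card ≤ 2) :
    ∑ e ∈ E, ∑ v ∈ e, chi2 E e v / (deg E v : ℚ) ≤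
      (Fintype.card V : ℚ) - ((Finset.univ.filter fun v : V => 6 ≤ deg E v).card : ℚ) := by
  rw [sum_sum_mem_comm]
  calc ∑ v, ∑ e ∈ E.filter (fun e => v ∈ e), chi2 E e v / (deg E v : ℚ)
      ≤ ∑ v : V, (1 - if 6 ≤ deg E v then (1 : ℚ) else 0) :=
        sum_le_sum fun v _ => sum_chi2_div_deg_le hlin.2 hs v
    _ = _ := by simp [sum_sub_distrib, sum_boole]

theorem stmt_12 {V : Type*} [Fintype V] [DecidableEq V] (E : Finset (Finset V))
    (hlin : Linear3 E) (hiso : ∀ v : V, 1 ≤ deg E v)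
    (hs : (Finset.univ.filter fun v : V => 6 ≤ deg E v).card ≤ 2) :
    ∑ e ∈ E, ∑ v ∈ e, chi2 E e v / (deg E v : ℚ) ≤
      (Fintype.card V : ℚ) - ((Finset.univ.filter fun v : V => 6 ≤ deg E v).card : ℚ) :=
  stmt_12_general E hlin hs
end

section
/- Suppose deg(x) ≤ deg(y) ≤ deg(z) for the three vertices of an edge e of a linear 3-graph, and χ(x,e)/deg(x) + χ(y,e)/deg(y) + χ(z,e)/deg(z) < 7/10, where χ(v,e) = 0 if deg(v) ≥ 6, χ(v,e) = 1 if deg(v) ∈ {1,2,4,5}, and for deg(v) = 3, χ(v,e) = 1.05 if e contains a vertex of degree ≥ 6 and χ(v,e) = 0.9 otherwise. Then deg(x) ≥ 2 and deg(y) ≥ 4. -/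
open Finset

theorem stmt_13 {V : Type*} [DecidableEq V] (E : Finset (Finset V)) (x y z : V)
    (hlin : Linear3 E) (he : ({x, y, z} : Finset V) ∈ E)
    (hxy : x ≠ y) (hxz : x ≠ z) (hyz : y ≠ z)
    (hord : deg E x ≤ deg E y ∧ deg E y ≤ deg E z)
    (hsum : chi2 E {x, y, z} x / (deg E x : ℚ) + chi2 E {x, y, z} y / (deg E y : ℚ) +
      chi2 E {x, y, z} z / (deg E z : ℚ) < 7 / 10) :
    2 ≤ deg E x ∧ 4 ≤ deg E y := by

  obtain ⟨hxy2, hyz2⟩ := hord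
  have hx1 : 1 ≤ deg E x := Finset.card_pos.2 ⟨{x,y,z}, by
    simp [deg, Finset.mem_filter, he]⟩
  have hnn : ∀ v : V, 0 ≤ chi2 E {x,y,z} v / (deg E v : ℚ) := fun v => by
    apply div_nonneg _ (by positivity)
    unfold chi2; split_ifs <;> norm_num
  have hX : 2 ≤ deg E x := by
    by_contra h
    have hdx : deg E x = 1 := by omega
    have hcx : chi2 E ({x,y,z} : Finset V) x = 1 := by simp [chi2, hdx]
    have hterm : chi2 E ({x,y,z} : Finset V) x / (deg E x : ℚ) = 1 := by
      rw [hcx, hdx]; norm_num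
    linarith [hnn y, hnn z]
  refine ⟨hX, ?_⟩
  by_contra h
  push_neg at h
  have hdx23 : deg E x = 2 ∨ deg E x = 3 := by omega
  rcases hdx23 with hdx | hdx
  · -- deg x = 2
    have hcx : chi2 E ({x,y,z} : Finset V) x = 1 := by simp [chi2, hdx]
    have htx : chi2 E ({x,y,z} : Finset V) x / (deg E x : ℚ) = 1/2 := by
      rw [hcx, hdx]; norm_num
    have hdy : deg E y = 2 ∨ deg E y = 3 := by omega
    rcases hdy with hdy | hdy
    · have hcy : chi2 E ({x,y,z} : Finset V) y = 1 := by simp [chi2, hdy]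
      have hty : chi2 E ({x,y,z} : Finset V) y / (deg E y : ℚ) = 1/2 := by
        rw [hcy, hdy]; norm_num
      linarith [hnn z]
    · have hcy : (9:ℚ)/10 ≤ chi2 E ({x,y,z} : Finset V) y := by
        unfold chi2; rw [hdy]; norm_num; split_ifs <;> norm_num
      have hty : (3:ℚ)/10 ≤ chi2 E ({x,y,z} : Finset V) y / (deg E y : ℚ) := by
        rw [hdy]; push_cast; linarith
      linarith [hnn z]
  · -- deg x = 3, so deg y = 3
    have hdy : deg E y = 3 := by omega
    by_cases h6 : ∃ u ∈ ({x,y,z} : Finset V), 6 ≤ deg E u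
    · have hcx : chi2 E ({x,y,z} : Finset V) x = 21/20 := by
        unfold chi2; rw [hdx, if_neg (by norm_num), if_pos rfl, if_pos h6]
      have hcy : chi2 E ({x,y,z} : Finset V) y = 21/20 := by
        unfold chi2; rw [hdy, if_neg (by norm_num), if_pos rfl, if_pos h6]
      have htx : chi2 E ({x,y,z} : Finset V) x / (deg E x : ℚ) = 7/20 := by
        rw [hcx, hdx]; norm_num
      have hty : chi2 E ({x,y,z} : Finset V) y / (deg E y : ℚ) = 7/20 := by
        rw [hcy, hdy]; norm_num
      linarith [hnn z]
    · have hcx : chi2 E ({x,y,z} : Finset V) x = 9/10 := by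
        unfold chi2; rw [hdx, if_neg (by norm_num), if_pos rfl, if_neg h6]
      have hcy : chi2 E ({x,y,z} : Finset V) y = 9/10 := by
        unfold chi2; rw [hdy, if_neg (by norm_num), if_pos rfl, if_neg h6]
      have htx : chi2 E ({x,y,z} : Finset V) x / (deg E x : ℚ) = 3/10 := by
        rw [hcx, hdx]; norm_num
      have hty : chi2 E ({x,y,z} : Finset V) y / (deg E y : ℚ) = 3/10 := by
        rw [hcy, hdy]; norm_num
      have h6' := h6
      push_neg at h6'
      have hz5 : deg E z < 6 := h6' z (by simp)
      have hdz : deg E z = 3 ∨ deg E z = 4 ∨ deg E z = 5 := by omega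
      have htz : (1:ℚ)/5 ≤ chi2 E ({x,y,z} : Finset V) z / (deg E z : ℚ) := by
        rcases hdz with hdz | hdz | hdz
        · have : chi2 E ({x,y,z} : Finset V) z = 9/10 := by
            unfold chi2; rw [hdz, if_neg (by norm_num), if_pos rfl, if_neg h6]
          rw [this, hdz]; norm_num
        · have : chi2 E ({x,y,z} : Finset V) z = 1 := by simp [chi2, hdz]
          rw [this, hdz]; norm_num
        · have : chi2 E ({x,y,z} : Finset V) z = 1 := by simp [chi2, hdz]
          rw [this, hdz]; norm_num
      linarith
end

section
/- Let G be a crown-free linear 3-graph with an edge e = {x,y,z} such that deg(y) = deg(z) = 5 and deg(x) ≥ 2. Define the bipartite graph H with parts X_H = {edges containing y other than e} and Y_H = {edges containing z other than e}, joining e_i ∈ X_H to e_j ∈ Y_H when e_i ∩ e_j ≠ ∅. If G(y) = G(z) (the neighborhoods of y and z outside {x,y,z} coincide), then H is 2-regular with 4 vertices in each part. -/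
open Finset

lemma aux_count {V : Type*} [DecidableEq V] (E : Finset (Finset V)) (x y z : V)
    (hlin : Linear3 E) (he : ({x, y, z} : Finset V) ∈ E)
    (hxy : x ≠ y) (hxz : x ≠ z) (hyz : y ≠ z)
    (hnb : nbhd E x y z y ⊆ nbhd E x y z z)
    (f : Finset V) (hf : f ∈ E) (hfy : y ∈ f) (hfne : f ≠ {x, y, z}) :
    ((E.filter fun g => z ∈ g ∧ g ≠ {x, y, z}).filter fun g => (f ∩ g).Nonempty).card = 2 := by
  obtain ⟨h3, hlin2⟩ := hlin
  have hcap := hlin2 f hf _ he hfne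
  have hxf : x ∉ f := by
    intro hxf
    have hsub : ({x, y} : Finset V) ⊆ f ∩ {x, y, z} := by
      intro v hv
      simp only [mem_insert, mem_singleton] at hv
      rcases hv with h | h <;> subst h <;> simp [hxf, hfy]
    have := (Finset.card_le_card hsub).trans hcap
    rw [Finset.card_pair hxy] at this
    omega
  have hzf : z ∉ f := by
    intro hzf
    have hsub : ({y, z} : Finset V) ⊆ f ∩ {x, y, z} := by
      intro v hv
      simp only [mem_insert, mem_singleton] at hv
      rcases hv with h | h <;> subst h <;> simp [hzf, hfy]
    have := (Finset.card_le_card hsub).trans hcap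
    rw [Finset.card_pair hyz] at this
    omega
  have hcard2 : (f.erase y).card = 2 := by
    rw [Finset.card_erase_of_mem hfy, h3 f hf]
  obtain ⟨a, b, hab, hfe⟩ := Finset.card_eq_two.mp hcard2
  have haey : a ∈ f.erase y := by rw [hfe]; simp
  have hbey : b ∈ f.erase y := by rw [hfe]; simp
  have haf : a ∈ f := Finset.mem_of_mem_erase haey
  have hbf : b ∈ f := Finset.mem_of_mem_erase hbey
  have hay : a ≠ y := Finset.ne_of_mem_erase haey
  have hby : b ≠ y := Finset.ne_of_mem_erase hbey
  -- a, b ∈ nbhd y, hence ∈ nbhd z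
  have hmem : ∀ c ∈ f.erase y, ∃ g ∈ E, z ∈ g ∧ c ∈ g := by
    intro c hc
    have hcf : c ∈ f := Finset.mem_of_mem_erase hc
    have hcy : c ≠ y := Finset.ne_of_mem_erase hc
    have hcx : c ≠ x := fun h => hxf (h ▸ hcf)
    have hcz : c ≠ z := fun h => hzf (h ▸ hcf)
    have h1 : c ∈ nbhd E x y z y := by
      simp only [nbhd, Finset.mem_sdiff, Finset.mem_biUnion, Finset.mem_filter,
        mem_insert, mem_singleton]
      exact ⟨⟨f, ⟨hf, hfy⟩, hcf⟩, by tauto⟩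
    have h2 := hnb h1
    simp only [nbhd, Finset.mem_sdiff, Finset.mem_biUnion, Finset.mem_filter, id] at h2
    obtain ⟨⟨g, ⟨hg, hgz⟩, hcg⟩, _⟩ := h2
    exact ⟨g, hg, hgz, hcg⟩
  obtain ⟨ga, hga, hgaz, haga⟩ := hmem a haey
  obtain ⟨gb, hgb, hgbz, hbgb⟩ := hmem b hbey
  have hfga : f ≠ ga := fun h => hzf (h ▸ hgaz)
  have hfgb : f ≠ gb := fun h => hzf (h ▸ hgbz)
  have hgagb : ga ≠ gb := by
    intro h
    subst h
    have hsub : ({a, b} : Finset V) ⊆ f ∩ ga := by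
      intro v hv
      simp only [mem_insert, mem_singleton] at hv
      rcases hv with h | h <;> subst h <;> simp [haf, hbf, haga, hbgb]
    have := (Finset.card_le_card hsub).trans (hlin2 f hf ga hga hfga)
    rw [Finset.card_pair hab] at this
    omega
  have hgane : ga ≠ ({x, y, z} : Finset V) := by
    intro h
    rw [h] at haga
    simp only [mem_insert, mem_singleton] at haga
    rcases haga with h | h | h
    · exact hxf (h ▸ haf)
    · exact hay h
    · exact hzf (h ▸ haf)
  have hgbne : gb ≠ ({x, y, z} : Finset V) := by
    intro h
    rw [h] at hbgb
    simp only [mem_insert, mem_singleton] at hbgb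
    rcases hbgb with h | h | h
    · exact hxf (h ▸ hbf)
    · exact hby h
    · exact hzf (h ▸ hbf)
  have hset : ((E.filter fun g => z ∈ g ∧ g ≠ {x, y, z}).filter fun g => (f ∩ g).Nonempty)
      = {ga, gb} := by
    apply Finset.ext
    intro g
    simp only [Finset.mem_filter, mem_insert, mem_singleton]
    constructor
    · rintro ⟨⟨hg, hgz, hgne⟩, v, hv⟩
      rw [Finset.mem_inter] at hv
      obtain ⟨hvf, hvg⟩ := hv
      have hvy : v ≠ y := by
        intro h
        have hcg := hlin2 g hg _ he hgne
        have hsub : ({y, z} : Finset V) ⊆ g ∩ {x, y, z} := by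
          intro w hw
          simp only [mem_insert, mem_singleton] at hw
          rcases hw with hh | hh <;> subst hh <;> simp [h ▸ hvg, hgz]
        have h2 := (Finset.card_le_card hsub).trans hcg
        rw [Finset.card_pair hyz] at h2
        omega
      have hvz : v ≠ z := fun h => hzf (h ▸ hvf)
      have hvab : v ∈ f.erase y := Finset.mem_erase.mpr ⟨hvy, hvf⟩
      rw [hfe] at hvab
      simp only [mem_insert, mem_singleton] at hvab
      have key : ∀ g' ∈ E, z ∈ g' → v ∈ g' → ∀ g'' ∈ E, z ∈ g'' → v ∈ g'' → g' = g'' := by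
        intro g' hg' hzg' hvg' g'' hg'' hzg'' hvg''
        by_contra hne
        have := hlin2 g' hg' g'' hg'' hne
        have hsub : ({v, z} : Finset V) ⊆ g' ∩ g'' := by
          intro w hw
          simp only [mem_insert, mem_singleton] at hw
          rcases hw with h | h <;> subst h <;> simp [hvg', hvg'', hzg', hzg'']
        have h2 := (Finset.card_le_card hsub).trans this
        rw [Finset.card_pair hvz] at h2
        omega
      rcases hvab with h | h
      · subst h; exact Or.inl (key g hg hgz hvg ga hga hgaz haga)
      · subst h; exact Or.inr (key g hg hgz hvg gb hgb hgbz hbgb)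
    · rintro (h | h) <;> subst h
      · exact ⟨⟨hga, hgaz, hgane⟩, a, Finset.mem_inter.mpr ⟨haf, haga⟩⟩
      · exact ⟨⟨hgb, hgbz, hgbne⟩, b, Finset.mem_inter.mpr ⟨hbf, hbgb⟩⟩
  rw [hset, Finset.card_pair hgagb]

theorem stmt_15 {V : Type*} [DecidableEq V] (E : Finset (Finset V)) (x y z : V)
    (hlin : Linear3 E) (hcf : ¬ HasCrown E) (he : ({x, y, z} : Finset V) ∈ E)
    (hxy : x ≠ y) (hxz : x ≠ z) (hyz : y ≠ z)
    (hx : 2 ≤ deg E x) (hy : deg E y = 5) (hz : deg E z = 5)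
    (hnb : nbhd E x y z y = nbhd E x y z z)
    (XH YH : Finset (Finset V))
    (hXH : XH = E.filter fun f => y ∈ f ∧ f ≠ {x, y, z})
    (hYH : YH = E.filter fun f => z ∈ f ∧ f ≠ {x, y, z}) :
    XH.card = 4 ∧ YH.card = 4 ∧
      (∀ f ∈ XH, (YH.filter fun g => (f ∩ g).Nonempty).card = 2) ∧
      (∀ g ∈ YH, (XH.filter fun f => (f ∩ g).Nonempty).card = 2) := by
  have hpair : ({x, z, y} : Finset V) = {x, y, z} := by
    rw [Finset.pair_comm z y]
  have hnbeq : ∀ p, nbhd E x z y p = nbhd E x y z p := by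
    intro p; unfold nbhd; rw [hpair]
  have hXc : XH.card = 4 := by
    rw [hXH, ← Finset.filter_filter, Finset.filter_ne',
      Finset.card_erase_of_mem (Finset.mem_filter.mpr ⟨he, by simp⟩)]
    have h5 : (E.filter fun f => y ∈ f).card = 5 := hy
    rw [h5]
  have hYc : YH.card = 4 := by
    rw [hYH, ← Finset.filter_filter, Finset.filter_ne',
      Finset.card_erase_of_mem (Finset.mem_filter.mpr ⟨he, by simp⟩)]
    have h5 : (E.filter fun f => z ∈ f).card = 5 := hz
    rw [h5]
  refine ⟨hXc, hYc, ?_, ?_⟩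
  · intro f hf
    rw [hXH, Finset.mem_filter] at hf
    obtain ⟨hfE, hfy, hfne⟩ := hf
    rw [hYH]
    exact aux_count E x y z hlin he hxy hxz hyz (le_of_eq hnb) f hfE hfy hfne
  · intro g hg
    rw [hYH, Finset.mem_filter] at hg
    obtain ⟨hgE, hgz, hgne⟩ := hg
    rw [hXH]
    have h2 := aux_count E x z y hlin (by rw [hpair]; exact he) hxz hxy hyz.symm
      (by rw [hnbeq, hnbeq]; exact le_of_eq hnb.symm) g hgE hgz (by rw [hpair]; exact hgne)
    rw [hpair] at h2
    simpa [Finset.inter_comm] using h2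
end

section
/- Let G be a crown-free linear 3-graph with an edge e = {x,y,z}, deg(x) ≥ 4, deg(y) = deg(z) = 5, and suppose the edges at z other than e are {z,a,b}, {z,c,d}, {z,r,s}, {z,p,q}, and the edges at y other than e are {y,a,c}, {y,b,d}, {y,r,p}, {y,s,q} (two disjoint 4-cycle intersection pattern). Then no edge of G contains x together with exactly one vertex of {a,b,c,d} and exactly one vertex of {r,s,p,q}. -/
open Finset

lemma mk_crown {V : Type*} [DecidableEq V] (E : Finset (Finset V))
    (x y z u v w1 w2 t1 t2 : V)
    (hn : ([x, y, z, u, v, w1, w2, t1, t2] : List V).Nodup)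
    (he : ({x, y, z} : Finset V) ∈ E) (h1 : ({x, u, v} : Finset V) ∈ E)
    (h2 : ({y, w1, w2} : Finset V) ∈ E) (h3 : ({z, t1, t2} : Finset V) ∈ E) :
    HasCrown E := by
  simp only [List.nodup_cons, List.mem_cons, List.not_mem_nil, or_false, not_or,
    List.nodup_nil, and_true] at hn
  obtain ⟨⟨hxy, hxz, hxu, hxv, hxw1, hxw2, hxt1, hxt2⟩,
    ⟨hyz, hyu, hyv, hyw1, hyw2, hyt1, hyt2⟩,
    ⟨hzu, hzv, hzw1, hzw2, hzt1, hzt2⟩,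
    ⟨huv, huw1, huw2, hut1, hut2⟩,
    ⟨hvw1, hvw2, hvt1, hvt2⟩,
    ⟨hw1w2, hw1t1, hw1t2⟩, ⟨hw2t1, hw2t2⟩, ht1t2⟩ := hn
  refine ⟨x, y, z, _, he, _, h1, _, h2, _, h3, hxy, hxz, hyz, rfl, ?_, ?_, ?_, ?_, ?_, ?_⟩ <;>
    (simp [Finset.disjoint_left]; aesop)


set_option maxHeartbeats 4000000 in
theorem stmt_16 {V : Type*} [DecidableEq V] (E : Finset (Finset V))
    (x y z a b c d r s p q : V)
    (hlin : Linear3 E) (hcf : ¬ HasCrown E)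
    (hdist : ([x, y, z, a, b, c, d, r, s, p, q] : List V).Nodup)
    (he : ({x, y, z} : Finset V) ∈ E)
    (hz1 : ({z, a, b} : Finset V) ∈ E) (hz2 : ({z, c, d} : Finset V) ∈ E)
    (hz3 : ({z, r, s} : Finset V) ∈ E) (hz4 : ({z, p, q} : Finset V) ∈ E)
    (hy1 : ({y, a, c} : Finset V) ∈ E) (hy2 : ({y, b, d} : Finset V) ∈ E)
    (hy3 : ({y, r, p} : Finset V) ∈ E) (hy4 : ({y, s, q} : Finset V) ∈ E)
    (hx : 4 ≤ deg E x) (hy : deg E y = 5) (hz : deg E z = 5) :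
    ¬ ∃ f ∈ E, x ∈ f ∧ (f ∩ ({a, b, c, d} : Finset V)).card = 1 ∧
      (f ∩ ({r, s, p, q} : Finset V)).card = 1 := by
  rintro ⟨f, hf, hxf, h1, h2⟩
  obtain ⟨u, hu⟩ := Finset.card_eq_one.mp h1
  obtain ⟨v, hv⟩ := Finset.card_eq_one.mp h2
  have huf : u ∈ f := Finset.mem_inter.mp (hu ▸ Finset.mem_singleton_self u) |>.1
  have hu4 : u ∈ ({a, b, c, d} : Finset V) :=
    Finset.mem_inter.mp (hu ▸ Finset.mem_singleton_self u) |>.2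
  have hvf : v ∈ f := Finset.mem_inter.mp (hv ▸ Finset.mem_singleton_self v) |>.1
  have hv4 : v ∈ ({r, s, p, q} : Finset V) :=
    Finset.mem_inter.mp (hv ▸ Finset.mem_singleton_self v) |>.2
  simp only [List.nodup_cons, List.mem_cons, List.not_mem_nil, or_false, not_or,
    List.nodup_nil, and_true] at hdist
  obtain ⟨⟨hxy, hxz, hxa, hxb, hxc, hxd, hxr, hxs, hxp, hxq⟩,
    ⟨hyz, hya, hyb, hyc, hyd, hyr, hys, hyp, hyq⟩,
    ⟨hza, hzb, hzc, hzd, hzr, hzs, hzp, hzq⟩,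
    ⟨hab, hac, had, har, has, hap, haq⟩,
    ⟨hbc, hbd, hbr, hbs, hbp, hbq⟩,
    ⟨hcd, hcr, hcs, hcp, hcq⟩,
    ⟨hdr, hds, hdp, hdq⟩, ⟨hrs, hrp, hrq⟩, ⟨hsp, hsq⟩, hpq, -⟩ := hdist
  simp only [Finset.mem_insert, Finset.mem_singleton] at hu4 hv4
  have hxu : x ≠ u := by rcases hu4 with rfl|rfl|rfl|rfl <;> assumption
  have hxv : x ≠ v := by rcases hv4 with rfl|rfl|rfl|rfl <;> assumption
  have huv : u ≠ v := by
    rcases hu4 with rfl|rfl|rfl|rfl <;> rcases hv4 with rfl|rfl|rfl|rfl <;> assumption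
  have hfeq : f = {x, u, v} := by
    apply (Finset.eq_of_subset_of_card_le _ _).symm
    · intro w hw
      simp only [Finset.mem_insert, Finset.mem_singleton] at hw
      rcases hw with rfl|rfl|rfl <;> assumption
    · rw [hlin.1 f hf, Finset.card_insert_of_notMem, Finset.card_insert_of_notMem,
        Finset.card_singleton] <;> simp [hxu, hxv, huv]
  subst hfeq
  apply hcf
  rcases hu4 with h4|h4|h4|h4 <;> rcases hv4 with h5|h5|h5|h5 <;> rw [h4, h5] at hf
  · exact mk_crown E x y z a r b d p q (by simp only [List.nodup_cons, List.mem_cons, List.not_mem_nil, or_false, not_or, List.nodup_nil, not_false_eq_true, and_true]; and_intros <;> first | assumption | (intro heq; exact absurd heq.symm (by assumption))) he hf hy2 hz4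
  · exact mk_crown E x y z a s b d p q (by simp only [List.nodup_cons, List.mem_cons, List.not_mem_nil, or_false, not_or, List.nodup_nil, not_false_eq_true, and_true]; and_intros <;> first | assumption | (intro heq; exact absurd heq.symm (by assumption))) he hf hy2 hz4
  · exact mk_crown E x y z a p b d r s (by simp only [List.nodup_cons, List.mem_cons, List.not_mem_nil, or_false, not_or, List.nodup_nil, not_false_eq_true, and_true]; and_intros <;> first | assumption | (intro heq; exact absurd heq.symm (by assumption))) he hf hy2 hz3
  · exact mk_crown E x y z a q b d r s (by simp only [List.nodup_cons, List.mem_cons, List.not_mem_nil, or_false, not_or, List.nodup_nil, not_false_eq_true, and_true]; and_intros <;> first | assumption | (intro heq; exact absurd heq.symm (by assumption))) he hf hy2 hz3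
  · exact mk_crown E x y z b r a c p q (by simp only [List.nodup_cons, List.mem_cons, List.not_mem_nil, or_false, not_or, List.nodup_nil, not_false_eq_true, and_true]; and_intros <;> first | assumption | (intro heq; exact absurd heq.symm (by assumption))) he hf hy1 hz4
  · exact mk_crown E x y z b s a c p q (by simp only [List.nodup_cons, List.mem_cons, List.not_mem_nil, or_false, not_or, List.nodup_nil, not_false_eq_true, and_true]; and_intros <;> first | assumption | (intro heq; exact absurd heq.symm (by assumption))) he hf hy1 hz4
  · exact mk_crown E x y z b p a c r s (by simp only [List.nodup_cons, List.mem_cons, List.not_mem_nil, or_false, not_or, List.nodup_nil, not_false_eq_true, and_true]; and_intros <;> first | assumption | (intro heq; exact absurd heq.symm (by assumption))) he hf hy1 hz3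
  · exact mk_crown E x y z b q a c r s (by simp only [List.nodup_cons, List.mem_cons, List.not_mem_nil, or_false, not_or, List.nodup_nil, not_false_eq_true, and_true]; and_intros <;> first | assumption | (intro heq; exact absurd heq.symm (by assumption))) he hf hy1 hz3
  · exact mk_crown E x y z c r b d p q (by simp only [List.nodup_cons, List.mem_cons, List.not_mem_nil, or_false, not_or, List.nodup_nil, not_false_eq_true, and_true]; and_intros <;> first | assumption | (intro heq; exact absurd heq.symm (by assumption))) he hf hy2 hz4
  · exact mk_crown E x y z c s b d p q (by simp only [List.nodup_cons, List.mem_cons, List.not_mem_nil, or_false, not_or, List.nodup_nil, not_false_eq_true, and_true]; and_intros <;> first | assumption | (intro heq; exact absurd heq.symm (by assumption))) he hf hy2 hz4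
  · exact mk_crown E x y z c p b d r s (by simp only [List.nodup_cons, List.mem_cons, List.not_mem_nil, or_false, not_or, List.nodup_nil, not_false_eq_true, and_true]; and_intros <;> first | assumption | (intro heq; exact absurd heq.symm (by assumption))) he hf hy2 hz3
  · exact mk_crown E x y z c q b d r s (by simp only [List.nodup_cons, List.mem_cons, List.not_mem_nil, or_false, not_or, List.nodup_nil, not_false_eq_true, and_true]; and_intros <;> first | assumption | (intro heq; exact absurd heq.symm (by assumption))) he hf hy2 hz3
  · exact mk_crown E x y z d r a c p q (by simp only [List.nodup_cons, List.mem_cons, List.not_mem_nil, or_false, not_or, List.nodup_nil, not_false_eq_true, and_true]; and_intros <;> first | assumption | (intro heq; exact absurd heq.symm (by assumption))) he hf hy1 hz4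
  · exact mk_crown E x y z d s a c p q (by simp only [List.nodup_cons, List.mem_cons, List.not_mem_nil, or_false, not_or, List.nodup_nil, not_false_eq_true, and_true]; and_intros <;> first | assumption | (intro heq; exact absurd heq.symm (by assumption))) he hf hy1 hz4
  · exact mk_crown E x y z d p a c r s (by simp only [List.nodup_cons, List.mem_cons, List.not_mem_nil, or_false, not_or, List.nodup_nil, not_false_eq_true, and_true]; and_intros <;> first | assumption | (intro heq; exact absurd heq.symm (by assumption))) he hf hy1 hz3
  · exact mk_crown E x y z d q a c r s (by simp only [List.nodup_cons, List.mem_cons, List.not_mem_nil, or_false, not_or, List.nodup_nil, not_false_eq_true, and_true]; and_intros <;> first | assumption | (intro heq; exact absurd heq.symm (by assumption))) he hf hy1 hz3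
end

section
/- Let G be a crown-free linear 3-graph with an edge e = {x,y,z}, deg(x) ≥ 4, deg(y) = deg(z) = 5, edges at z other than e being {z,a,b}, {z,c,d}, {z,r,s}, {z,p,q}, edges at y other than e being {y,a,c}, {y,b,d}, {y,r,p}, {y,s,q}, and every edge containing x (other than e) contained in {x,a,d}, {x,b,c}, {x,r,q}, {x,s,p}. Then no edge of G disjoint from {x,y,z} intersects the set {a,b,c,d,r,s,p,q}. -/
open Finset

section Helpers
variable {V : Type*} [DecidableEq V]

lemma tri_swap (u v w : V) : ({u, v, w} : Finset V) = {u, w, v} := by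
  ext t; simp only [Finset.mem_insert, Finset.mem_singleton]; tauto

lemma lin_pair {E : Finset (Finset V)} (hlin : Linear3 E) {g1 g2 : Finset V}
    (h1 : g1 ∈ E) (h2 : g2 ∈ E) (hne : g1 ≠ g2) {u v : V} (huv : u ≠ v)
    (hu1 : u ∈ g1) (hu2 : u ∈ g2) (hv1 : v ∈ g1) (hv2 : v ∈ g2) : False := by
  have hle := hlin.2 g1 h1 g2 h2 hne
  have hsub : ({u, v} : Finset V) ⊆ g1 ∩ g2 := by
    intro t ht; simp only [Finset.mem_insert, Finset.mem_singleton] at ht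
    rcases ht with rfl | rfl <;> exact Finset.mem_inter.2 ⟨by assumption, by assumption⟩
  have hc := Finset.card_le_card hsub
  rw [Finset.card_pair huv] at hc
  omega

lemma inter_first {c1 p1 p2 q1 q2 : V} (h1 : p1 ≠ q1) (h2 : p1 ≠ q2) (h3 : p2 ≠ q1)
    (h4 : p2 ≠ q2) : ({c1, p1, p2} : Finset V) ∩ {c1, q1, q2} = {c1} := by
  ext t
  simp only [Finset.mem_inter, Finset.mem_insert, Finset.mem_singleton]
  constructor
  · rintro ⟨rfl | rfl | rfl, h⟩
    · rfl
    · rcases h with h | h | h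
      exacts [h, absurd h h1, absurd h h2]
    · rcases h with h | h | h
      exacts [h, absurd h h3, absurd h h4]
  · rintro rfl; exact ⟨Or.inl rfl, Or.inl rfl⟩

lemma inter_last {c1 p1 p2 q1 q2 : V} (h1 : p1 ≠ q1) (h2 : p1 ≠ q2) (h3 : p2 ≠ q1)
    (h4 : p2 ≠ q2) : ({p1, p2, c1} : Finset V) ∩ {q1, q2, c1} = {c1} := by
  ext t
  simp only [Finset.mem_inter, Finset.mem_insert, Finset.mem_singleton]
  constructor
  · rintro ⟨rfl | rfl | rfl, h⟩
    · rcases h with h | h | h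
      exacts [absurd h h1, absurd h h2, h]
    · rcases h with h | h | h
      exacts [absurd h h3, absurd h h4, h]
    · rfl
  · rintro rfl; exact ⟨Or.inr (Or.inr rfl), Or.inr (Or.inr rfl)⟩

lemma interf_2 {f : Finset V} {u v w : V} (hu : u ∉ f) (hv : v ∈ f) (hw : w ∉ f) :
    f ∩ ({u, v, w} : Finset V) = {v} := by
  ext t
  simp only [Finset.mem_inter, Finset.mem_insert, Finset.mem_singleton]
  constructor
  · rintro ⟨htf, rfl | rfl | rfl⟩
    exacts [absurd htf hu, rfl, absurd htf hw]
  · rintro rfl; exact ⟨hv, Or.inr (Or.inl rfl)⟩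

lemma interf_3 {f : Finset V} {u v w : V} (hu : u ∉ f) (hv : v ∉ f) (hw : w ∈ f) :
    f ∩ ({u, v, w} : Finset V) = {w} := by
  ext t
  simp only [Finset.mem_inter, Finset.mem_insert, Finset.mem_singleton]
  constructor
  · rintro ⟨htf, rfl | rfl | rfl⟩
    exacts [absurd htf hu, absurd htf hv, rfl]
  · rintro rfl; exact ⟨hw, Or.inr (Or.inr rfl)⟩

lemma disjf {f : Finset V} {u v w : V} (hu : u ∉ f) (hv : v ∉ f) (hw : w ∉ f) :
    Disjoint f ({u, v, w} : Finset V) := by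
  rw [Finset.disjoint_right]
  intro t ht
  simp only [Finset.mem_insert, Finset.mem_singleton] at ht
  rcases ht with rfl | rfl | rfl <;> assumption

lemma disj33 {t1 t2 t3 u1 u2 u3 : V} (a1 : t1 ≠ u1) (a2 : t1 ≠ u2) (a3 : t1 ≠ u3)
    (b1 : t2 ≠ u1) (b2 : t2 ≠ u2) (b3 : t2 ≠ u3)
    (c1 : t3 ≠ u1) (c2 : t3 ≠ u2) (c3 : t3 ≠ u3) :
    Disjoint ({t1, t2, t3} : Finset V) ({u1, u2, u3} : Finset V) := by
  rw [Finset.disjoint_left]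
  intro t ht hu
  simp only [Finset.mem_insert, Finset.mem_singleton] at ht hu
  rcases ht with rfl | rfl | rfl <;> rcases hu with h | h | h <;> tauto

end Helpers

lemma key_s17 {V : Type*} [DecidableEq V] (E : Finset (Finset V)) (x y z a b c d r s p q : V)
    (hlin : Linear3 E) (hcf : ¬ HasCrown E)
    (nxy : x ≠ y) (nxz : x ≠ z) (nxa : x ≠ a) (nxb : x ≠ b) (nxc : x ≠ c) (nxd : x ≠ d) (nxr : x ≠ r) (nxs : x ≠ s) (nxp : x ≠ p) (nxq : x ≠ q) (nyz : y ≠ z) (nya : y ≠ a) (nyb : y ≠ b) (nyc : y ≠ c) (nyd : y ≠ d) (nyr : y ≠ r) (nys : y ≠ s) (nyp : y ≠ p) (nyq : y ≠ q) (nza : z ≠ a) (nzb : z ≠ b) (nzc : z ≠ c) (nzd : z ≠ d) (nzr : z ≠ r) (nzs : z ≠ s) (nzp : z ≠ p) (nzq : z ≠ q) (nab : a ≠ b) (nac : a ≠ c) (nad : a ≠ d) (nar : a ≠ r) (nas : a ≠ s) (nap : a ≠ p) (naq : a ≠ q) (nbc : b ≠ c) (nbd : b ≠ d) (nbr : b ≠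 r) (nbs : b ≠ s) (nbp : b ≠ p) (nbq : b ≠ q) (ncd : c ≠ d) (ncr : c ≠ r) (ncs : c ≠ s) (ncp : c ≠ p) (ncq : c ≠ q) (ndr : d ≠ r) (nds : d ≠ s) (ndp : d ≠ p) (ndq : d ≠ q) (nrs : r ≠ s) (nrp : r ≠ p) (nrq : r ≠ q) (nsp : s ≠ p) (nsq : s ≠ q) (npq : p ≠ q)
    (he : ({x, y, z} : Finset V) ∈ E)
    (hz1 : ({z, a, b} : Finset V) ∈ E) (hz2 : ({z, c, d} : Finset V) ∈ E)
    (hz3 : ({z, r, s} : Finset V) ∈ E) (hz4 : ({z, p, q} : Finset V) ∈ E)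
    (hy1 : ({y, a, c} : Finset V) ∈ E) (hy2 : ({y, b, d} : Finset V) ∈ E)
    (hy3 : ({y, r, p} : Finset V) ∈ E) (hy4 : ({y, s, q} : Finset V) ∈ E)
    (hx : 4 ≤ deg E x)
    (hxe : ∀ f ∈ E, x ∈ f → f ≠ {x, y, z} →
      f = {x, a, d} ∨ f = {x, b, c} ∨ f = {x, r, q} ∨ f = {x, s, p})
    (f : Finset V) (hf : f ∈ E) (hfx : x ∉ f) (hfy : y ∉ f) (hfz : z ∉ f) : a ∉ f := by
  intro haf
  have fnez : ∀ {u v : V}, f ≠ ({z, u, v} : Finset V) := by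
    intro u v h; rw [h] at hfz; simp at hfz
  have fney : ∀ {u v : V}, f ≠ ({y, u, v} : Finset V) := by
    intro u v h; rw [h] at hfy; simp at hfy
  have fnex : ∀ {u v : V}, f ≠ ({x, u, v} : Finset V) := by
    intro u v h; rw [h] at hfx; simp at hfx
  have hbf : b ∉ f := fun hb =>
    lin_pair hlin hf hz1 fnez nab haf (by simp) hb (by simp)
  have hcf3 : c ∉ f := fun hc =>
    lin_pair hlin hf hy1 fney nac haf (by simp) hc (by simp)
  have hdeg : 4 ≤ (E.filter fun g => x ∈ g).card := by simpa [deg] using hx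
  have key1 : ({x, a, d} : Finset V) ∈ E ∨ ({x, b, c} : Finset V) ∈ E := by
    by_contra hcon
    push_neg at hcon
    obtain ⟨hA, hB⟩ := hcon
    have hsub : E.filter (fun g => x ∈ g) ⊆
        {({x, y, z} : Finset V), {x, r, q}, {x, s, p}} := by
      intro g hg
      simp only [Finset.mem_filter] at hg
      obtain ⟨hgE, hxg⟩ := hg
      by_cases hgx : g = ({x, y, z} : Finset V)
      · simp [hgx]
      · rcases hxe g hgE hxg hgx with h | h | h | h
        · exact absurd (h ▸ hgE) hA
        · exact absurd (h ▸ hgE) hB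
        · simp [h]
        · simp [h]
    have h3 : (E.filter fun g => x ∈ g).card ≤ 3 := by
      refine le_trans (Finset.card_le_card hsub) ?_
      refine le_trans (Finset.card_insert_le _ _) ?_
      have := Finset.card_insert_le ({x, r, q} : Finset V) ({({x, s, p} : Finset V)})
      simp only [Finset.card_singleton] at this
      omega
    omega
  have key2 : ({x, r, q} : Finset V) ∈ E ∨ ({x, s, p} : Finset V) ∈ E := by
    by_contra hcon
    push_neg at hcon
    obtain ⟨hA, hB⟩ := hcon
    have hsub : E.filter (fun g => x ∈ g) ⊆
        {({x, y, z} : Finset V), {x, a, d}, {x, b, c}} := by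
      intro g hg
      simp only [Finset.mem_filter] at hg
      obtain ⟨hgE, hxg⟩ := hg
      by_cases hgx : g = ({x, y, z} : Finset V)
      · simp [hgx]
      · rcases hxe g hgE hxg hgx with h | h | h | h
        · simp [h]
        · simp [h]
        · exact absurd (h ▸ hgE) hA
        · exact absurd (h ▸ hgE) hB
    have h3 : (E.filter fun g => x ∈ g).card ≤ 3 := by
      refine le_trans (Finset.card_le_card hsub) ?_
      refine le_trans (Finset.card_insert_le _ _) ?_
      have := Finset.card_insert_le ({x, a, d} : Finset V) ({({x, b, c} : Finset V)})
      simp only [Finset.card_singleton] at this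
      omega
    omega
  by_cases hdf : d ∈ f
  · -- Case 1 : d ∈ f
    rcases key1 with hAd | hBc
    · exact lin_pair hlin hf hAd fnex nad haf (by simp) hdf (by simp)
    have four : ∀ u v : V, u ∈ f → v ∈ f → a ≠ u → a ≠ v → d ≠ u → d ≠ v → u ≠ v → False := by
      intro u v hu hv h1 h2 h3 h4 h5
      have hsub : ({a, d, u, v} : Finset V) ⊆ f := by
        intro t ht
        simp only [Finset.mem_insert, Finset.mem_singleton] at ht
        rcases ht with rfl | rfl | rfl | rfl <;> assumption
      have hc4 : ({a, d, u, v} : Finset V).card = 4 := by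
        rw [Finset.card_insert_of_notMem (by
              simp only [Finset.mem_insert, Finset.mem_singleton]; push_neg
              exact ⟨nad, h1, h2⟩),
            Finset.card_insert_of_notMem (by
              simp only [Finset.mem_insert, Finset.mem_singleton]; push_neg
              exact ⟨h3, h4⟩),
            Finset.card_pair h5]
      have hle := Finset.card_le_card hsub
      rw [hlin.1 f hf, hc4] at hle
      omega
    by_cases hrs : r ∈ f ∨ s ∈ f
    · have hpf : p ∉ f := fun hp => hrs.elim
        (fun h => four r p h hp nar nap ndr ndp nrp)
        (fun h => four s p h hp nas nap nds ndp nsp)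
      have hqf : q ∉ f := fun hq => hrs.elim
        (fun h => four r q h hq nar naq ndr ndq nrq)
        (fun h => four s q h hq nas naq nds ndq nsq)
      exact hcf ⟨z, c, d, {z, c, d}, hz2, {z, p, q}, hz4, {x, b, c}, hBc, f, hf,
        nzc, nzd, ncd, rfl,
        disj33 nxz.symm nzb nzc nxp.symm nbp.symm ncp.symm nxq.symm nbq.symm ncq.symm,
        (disjf hfz hpf hqf).symm,
        (disjf hfx hbf hcf3).symm,
        inter_first ncp.symm ndp.symm ncq.symm ndq.symm,
        (by rw [tri_swap z c d]; exact inter_last nxz nxd nzb.symm nbd),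
        interf_3 hfz hcf3 hdf⟩
    · push_neg at hrs
      obtain ⟨hrf, hsf⟩ := hrs
      exact hcf ⟨z, c, d, {z, c, d}, hz2, {z, r, s}, hz3, {x, b, c}, hBc, f, hf,
        nzc, nzd, ncd, rfl,
        disj33 nxz.symm nzb nzc nxr.symm nbr.symm ncr.symm nxs.symm nbs.symm ncs.symm,
        (disjf hfz hrf hsf).symm,
        (disjf hfx hbf hcf3).symm,
        inter_first ncr.symm ndr.symm ncs.symm nds.symm,
        (by rw [tri_swap z c d]; exact inter_last nxz nxd nzb.symm nbd),
        interf_3 hfz hcf3 hdf⟩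
  · -- d ∉ f
    by_cases hrq : r ∈ f ∧ q ∈ f
    · rcases key2 with hRQ | hSP
      · exact lin_pair hlin hf hRQ fnex nrq hrq.1 (by simp) hrq.2 (by simp)
      · have hpf : p ∉ f := fun hp =>
          lin_pair hlin hf hz4 fnez npq hp (by simp) hrq.2 (by simp)
        have hsf : s ∉ f := fun hs =>
          lin_pair hlin hf hz3 fnez nrs hrq.1 (by simp) hs (by simp)
        exact hcf ⟨y, r, p, {y, r, p}, hy3, {y, b, d}, hy2, f, hf, {x, s, p}, hSP,
          nyr, nyp, nrp, rfl,
          (disjf hfy hbf hdf).symm,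
          disj33 nxy.symm nys nyp nxb.symm nbs nbp nxd.symm nds ndp,
          disjf hfx hsf hpf,
          inter_first nbr nbp ndr ndp,
          interf_2 hfy hrq.1 hpf,
          inter_last nxy nxr nys.symm nrs.symm⟩
    · by_cases hsp : s ∈ f ∧ p ∈ f
      · rcases key2 with hRQ | hSP
        · have hrf : r ∉ f := fun hr =>
            lin_pair hlin hf hz3 fnez nrs hr (by simp) hsp.1 (by simp)
          have hqf : q ∉ f := fun hq =>
            lin_pair hlin hf hz4 fnez npq hsp.2 (by simp) hq (by simp)
          exact hcf ⟨y, s, q, {y, s, q}, hy4, {y, b, d}, hy2, f, hf, {x, r, q}, hRQ,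
            nys, nyq, nsq, rfl,
            (disjf hfy hbf hdf).symm,
            disj33 nxy.symm nyr nyq nxb.symm nbr nbq nxd.symm ndr ndq,
            disjf hfx hrf hqf,
            inter_first nbs nbq nds ndq,
            interf_2 hfy hsp.1 hqf,
            inter_last nxy nxs nyr.symm nrs⟩
        · exact lin_pair hlin hf hSP fnex nsp hsp.1 (by simp) hsp.2 (by simp)
      · -- case 4
        by_cases hrp : r ∈ f ∨ p ∈ f
        · have hsf : s ∉ f := by
            rcases hrp with h | h
            · exact fun hs => lin_pair hlin hf hz3 fnez nrs h (by simp) hs (by simp)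
            · exact fun hs => hsp ⟨hs, h⟩
          have hqf : q ∉ f := by
            rcases hrp with h | h
            · exact fun hq => hrq ⟨h, hq⟩
            · exact fun hq => lin_pair hlin hf hz4 fnez npq h (by simp) hq (by simp)
          exact hcf ⟨y, a, c, {y, a, c}, hy1, {y, s, q}, hy4, f, hf, {z, c, d}, hz2,
            nya, nyc, nac, rfl,
            (disjf hfy hsf hqf).symm,
            disj33 nyz nyc nyd nzs.symm ncs.symm nds.symm nzq.symm ncq.symm ndq.symm,
            disjf hfz hcf3 hdf,
            inter_first nas.symm ncs.symm naq.symm ncq.symm,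
            interf_2 hfy haf hcf3,
            (by rw [tri_swap z c d]; exact inter_last nyz.symm nza nyd.symm nad.symm)⟩
        · push_neg at hrp
          obtain ⟨hrf, hpf⟩ := hrp
          exact hcf ⟨y, a, c, {y, a, c}, hy1, {y, r, p}, hy3, f, hf, {z, c, d}, hz2,
            nya, nyc, nac, rfl,
            (disjf hfy hrf hpf).symm,
            disj33 nyz nyc nyd nzr.symm ncr.symm ndr.symm nzp.symm ncp.symm ndp.symm,
            disjf hfz hcf3 hdf,
            inter_first nar.symm ncr.symm nap.symm ncp.symm,
            interf_2 hfy haf hcf3,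
            (by rw [tri_swap z c d]; exact inter_last nyz.symm nza nyd.symm nad.symm)⟩

theorem stmt_17 {V : Type*} [DecidableEq V] (E : Finset (Finset V))
    (x y z a b c d r s p q : V)
    (hlin : Linear3 E) (hcf : ¬ HasCrown E)
    (hdist : ([x, y, z, a, b, c, d, r, s, p, q] : List V).Nodup)
    (he : ({x, y, z} : Finset V) ∈ E)
    (hz1 : ({z, a, b} : Finset V) ∈ E) (hz2 : ({z, c, d} : Finset V) ∈ E)
    (hz3 : ({z, r, s} : Finset V) ∈ E) (hz4 : ({z, p, q} : Finset V) ∈ E)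
    (hy1 : ({y, a, c} : Finset V) ∈ E) (hy2 : ({y, b, d} : Finset V) ∈ E)
    (hy3 : ({y, r, p} : Finset V) ∈ E) (hy4 : ({y, s, q} : Finset V) ∈ E)
    (hx : 4 ≤ deg E x) (hy : deg E y = 5) (hz : deg E z = 5)
    (hxe : ∀ f ∈ E, x ∈ f → f ≠ {x, y, z} →
      f = {x, a, d} ∨ f = {x, b, c} ∨ f = {x, r, q} ∨ f = {x, s, p}) :
    ∀ f ∈ E, f ∩ ({x, y, z} : Finset V) = ∅ →
      f ∩ ({a, b, c, d, r, s, p, q} : Finset V) = ∅ := by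
  simp only [List.nodup_cons, List.mem_cons, List.not_mem_nil, or_false, not_or,
    List.nodup_nil, and_true, not_false_iff] at hdist
  obtain ⟨⟨nxy,nxz,nxa,nxb,nxc,nxd,nxr,nxs,nxp,nxq⟩, ⟨nyz,nya,nyb,nyc,nyd,nyr,nys,nyp,nyq⟩, ⟨nza,nzb,nzc,nzd,nzr,nzs,nzp,nzq⟩, ⟨nab,nac,nad,nar,nas,nap,naq⟩, ⟨nbc,nbd,nbr,nbs,nbp,nbq⟩, ⟨ncd,ncr,ncs,ncp,ncq⟩, ⟨ndr,nds,ndp,ndq⟩, ⟨nrs,nrp,nrq⟩, ⟨nsp,nsq⟩, npq⟩ := hdist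
  have nxy : x ≠ y := nxy
  have nxz : x ≠ z := nxz
  have nxa : x ≠ a := nxa
  have nxb : x ≠ b := nxb
  have nxc : x ≠ c := nxc
  have nxd : x ≠ d := nxd
  have nxr : x ≠ r := nxr
  have nxs : x ≠ s := nxs
  have nxp : x ≠ p := nxp
  have nxq : x ≠ q := nxq
  have nyz : y ≠ z := nyz
  have nya : y ≠ a := nya
  have nyb : y ≠ b := nyb
  have nyc : y ≠ c := nyc
  have nyd : y ≠ d := nyd
  have nyr : y ≠ r := nyr
  have nys : y ≠ s := nys
  have nyp : y ≠ p := nyp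
  have nyq : y ≠ q := nyq
  have nza : z ≠ a := nza
  have nzb : z ≠ b := nzb
  have nzc : z ≠ c := nzc
  have nzd : z ≠ d := nzd
  have nzr : z ≠ r := nzr
  have nzs : z ≠ s := nzs
  have nzp : z ≠ p := nzp
  have nzq : z ≠ q := nzq
  have nab : a ≠ b := nab
  have nac : a ≠ c := nac
  have nad : a ≠ d := nad
  have nar : a ≠ r := nar
  have nas : a ≠ s := nas
  have nap : a ≠ p := nap
  have naq : a ≠ q := naq
  have nbc : b ≠ c := nbc
  have nbd : b ≠ d := nbd
  have nbr : b ≠ r := nbr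
  have nbs : b ≠ s := nbs
  have nbp : b ≠ p := nbp
  have nbq : b ≠ q := nbq
  have ncd : c ≠ d := ncd
  have ncr : c ≠ r := ncr
  have ncs : c ≠ s := ncs
  have ncp : c ≠ p := ncp
  have ncq : c ≠ q := ncq
  have ndr : d ≠ r := ndr
  have nds : d ≠ s := nds
  have ndp : d ≠ p := ndp
  have ndq : d ≠ q := ndq
  have nrs : r ≠ s := nrs
  have nrp : r ≠ p := nrp
  have nrq : r ≠ q := nrq
  have nsp : s ≠ p := nsp
  have nsq : s ≠ q := nsq
  have npq : p ≠ q := npq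
  intro f hf hempty
  have hmem : ∀ t, t ∈ f → t ∉ ({x, y, z} : Finset V) := by
    intro t ht hts
    have hin : t ∈ f ∩ ({x, y, z} : Finset V) := Finset.mem_inter.2 ⟨ht, hts⟩
    rw [hempty] at hin
    exact absurd hin (Finset.notMem_empty t)
  have hfx : x ∉ f := fun h => hmem x h (by simp)
  have hfy : y ∉ f := fun h => hmem y h (by simp)
  have hfz : z ∉ f := fun h => hmem z h (by simp)
  have h_a : a ∉ f := key_s17 E x y z a b c d r s p q hlin hcf
    nxy nxz nxa nxb nxc nxd nxr nxs nxp nxq nyz nya nyb nyc nyd nyr nys nyp nyq nza nzb nzc nzd nzr nzs nzp nzq nab nac nad nar nas nap naq nbc nbd nbr nbs nbp nbq ncd ncr ncs ncp ncq ndr nds ndp ndq nrs nrp nrq nsp nsq npq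
    he hz1 hz2 hz3 hz4 hy1 hy2 hy3 hy4 hx
    (fun g hg hxg hgne => by
    rcases hxe g hg hxg hgne with h|h|h|h
    · exact Or.inl (h)
    · exact Or.inr (Or.inl (h))
    · exact Or.inr (Or.inr (Or.inl (h)))
    · exact Or.inr (Or.inr (Or.inr (h))))
    f hf hfx hfy hfz
  have h_b : b ∉ f := key_s17 E x y z b a d c r s p q hlin hcf
    nxy nxz nxb nxa nxd nxc nxr nxs nxp nxq nyz nyb nya nyd nyc nyr nys nyp nyq nzb nza nzd nzc nzr nzs nzp nzq nab.symm nbd nbc nbr nbs nbp nbq nad nac nar nas nap naq ncd.symm ndr nds ndp ndq ncr ncs ncp ncq nrs nrp nrq nsp nsq npq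
    he (tri_swap z a b ▸ hz1) (tri_swap z c d ▸ hz2) hz3 hz4 hy2 hy1 hy3 hy4 hx
    (fun g hg hxg hgne => by
    rcases hxe g hg hxg hgne with h|h|h|h
    · exact Or.inr (Or.inl (h))
    · exact Or.inl (h)
    · exact Or.inr (Or.inr (Or.inl (h)))
    · exact Or.inr (Or.inr (Or.inr (h))))
    f hf hfx hfy hfz
  have h_c : c ∉ f := key_s17 E x y z c d a b r s p q hlin hcf
    nxy nxz nxc nxd nxa nxb nxr nxs nxp nxq nyz nyc nyd nya nyb nyr nys nyp nyq nzc nzd nza nzb nzr nzs nzp nzq ncd nac.symm nbc.symm ncr ncs ncp ncq nad.symm nbd.symm ndr nds ndp ndq nab nar nas nap naq nbr nbs nbp nbq nrs nrp nrq nsp nsq npq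
    he hz2 hz1 hz3 hz4 (tri_swap y a c ▸ hy1) (tri_swap y b d ▸ hy2) hy3 hy4 hx
    (fun g hg hxg hgne => by
    rcases hxe g hg hxg hgne with h|h|h|h
    · exact Or.inr (Or.inl (h.trans (tri_swap x a d)))
    · exact Or.inl (h.trans (tri_swap x b c))
    · exact Or.inr (Or.inr (Or.inl (h)))
    · exact Or.inr (Or.inr (Or.inr (h))))
    f hf hfx hfy hfz
  have h_d : d ∉ f := key_s17 E x y z d c b a r s p q hlin hcf
    nxy nxz nxd nxc nxb nxa nxr nxs nxp nxq nyz nyd nyc nyb nya nyr nys nyp nyq nzd nzc nzb nza nzr nzs nzp nzq ncd.symm nbd.symm nad.symm ndr nds ndp ndq nbc.symm nac.symm ncr ncs ncp ncq nab.symm nbr nbs nbp nbq nar nas nap naq nrs nrp nrq nsp nsq npq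
    he (tri_swap z c d ▸ hz2) (tri_swap z a b ▸ hz1) hz3 hz4 (tri_swap y b d ▸ hy2) (tri_swap y a c ▸ hy1) hy3 hy4 hx
    (fun g hg hxg hgne => by
    rcases hxe g hg hxg hgne with h|h|h|h
    · exact Or.inl (h.trans (tri_swap x a d))
    · exact Or.inr (Or.inl (h.trans (tri_swap x b c)))
    · exact Or.inr (Or.inr (Or.inl (h)))
    · exact Or.inr (Or.inr (Or.inr (h))))
    f hf hfx hfy hfz
  have h_r : r ∉ f := key_s17 E x y z r s p q a b c d hlin hcf
    nxy nxz nxr nxs nxp nxq nxa nxb nxc nxd nyz nyr nys nyp nyq nya nyb nyc nyd nzr nzs nzp nzq nza nzb nzc nzd nrs nrp nrq nar.symm nbr.symm ncr.symm ndr.symm nsp nsq nas.symm nbs.symm ncs.symm nds.symm npq nap.symm nbp.symm ncp.symm ndp.symm naq.symm nbq.symm ncq.symm ndq.symm nab nac nad nbc nbd ncd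
    he hz3 hz4 hz1 hz2 hy3 hy4 hy1 hy2 hx
    (fun g hg hxg hgne => by
    rcases hxe g hg hxg hgne with h|h|h|h
    · exact Or.inr (Or.inr (Or.inl (h)))
    · exact Or.inr (Or.inr (Or.inr (h)))
    · exact Or.inl (h)
    · exact Or.inr (Or.inl (h)))
    f hf hfx hfy hfz
  have h_s : s ∉ f := key_s17 E x y z s r q p b a d c hlin hcf
    nxy nxz nxs nxr nxq nxp nxb nxa nxd nxc nyz nys nyr nyq nyp nyb nya nyd nyc nzs nzr nzq nzp nzb nza nzd nzc nrs.symm nsq nsp nbs.symm nas.symm nds.symm ncs.symm nrq nrp nbr.symm nar.symm ndr.symm ncr.symm npq.symm nbq.symm naq.symm ndq.symm ncq.symm nbp.symm nap.symm ndp.symm ncp.symm nab.symm nbd nbc nad nac ncd.symm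
    he (tri_swap z r s ▸ hz3) (tri_swap z p q ▸ hz4) (tri_swap z a b ▸ hz1) (tri_swap z c d ▸ hz2) hy4 hy3 hy2 hy1 hx
    (fun g hg hxg hgne => by
    rcases hxe g hg hxg hgne with h|h|h|h
    · exact Or.inr (Or.inr (Or.inr (h)))
    · exact Or.inr (Or.inr (Or.inl (h)))
    · exact Or.inr (Or.inl (h))
    · exact Or.inl (h))
    f hf hfx hfy hfz
  have h_p : p ∉ f := key_s17 E x y z p q r s c d a b hlin hcf
    nxy nxz nxp nxq nxr nxs nxc nxd nxa nxb nyz nyp nyq nyr nys nyc nyd nya nyb nzp nzq nzr nzs nzc nzd nza nzb npq nrp.symm nsp.symm ncp.symm ndp.symm nap.symm nbp.symm nrq.symm nsq.symm ncq.symm ndq.symm naq.symm nbq.symm nrs ncr.symm ndr.symm nar.symm nbr.symm ncs.symm nds.symm nas.symm nbs.symm ncd nac.symm nbc.symm nad.symm nbd.symm nab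
    he hz4 hz3 hz2 hz1 (tri_swap y r p ▸ hy3) (tri_swap y s q ▸ hy4) (tri_swap y a c ▸ hy1) (tri_swap y b d ▸ hy2) hx
    (fun g hg hxg hgne => by
    rcases hxe g hg hxg hgne with h|h|h|h
    · exact Or.inr (Or.inr (Or.inr (h.trans (tri_swap x a d))))
    · exact Or.inr (Or.inr (Or.inl (h.trans (tri_swap x b c))))
    · exact Or.inr (Or.inl (h.trans (tri_swap x r q)))
    · exact Or.inl (h.trans (tri_swap x s p)))
    f hf hfx hfy hfz
  have h_q : q ∉ f := key_s17 E x y z q p s r d c b a hlin hcf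
    nxy nxz nxq nxp nxs nxr nxd nxc nxb nxa nyz nyq nyp nys nyr nyd nyc nyb nya nzq nzp nzs nzr nzd nzc nzb nza npq.symm nsq.symm nrq.symm ndq.symm ncq.symm nbq.symm naq.symm nsp.symm nrp.symm ndp.symm ncp.symm nbp.symm nap.symm nrs.symm nds.symm ncs.symm nbs.symm nas.symm ndr.symm ncr.symm nbr.symm nar.symm ncd.symm nbd.symm nad.symm nbc.symm nac.symm nab.symm
    he (tri_swap z p q ▸ hz4) (tri_swap z r s ▸ hz3) (tri_swap z c d ▸ hz2) (tri_swap z a b ▸ hz1) (tri_swap y s q ▸ hy4) (tri_swap y r p ▸ hy3) (tri_swap y b d ▸ hy2) (tri_swap y a c ▸ hy1) hx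
    (fun g hg hxg hgne => by
    rcases hxe g hg hxg hgne with h|h|h|h
    · exact Or.inr (Or.inr (Or.inl (h.trans (tri_swap x a d))))
    · exact Or.inr (Or.inr (Or.inr (h.trans (tri_swap x b c))))
    · exact Or.inl (h.trans (tri_swap x r q))
    · exact Or.inr (Or.inl (h.trans (tri_swap x s p))))
    f hf hfx hfy hfz
  rw [Finset.eq_empty_iff_forall_notMem]
  intro t ht
  rw [Finset.mem_inter] at ht
  obtain ⟨htf, hts⟩ := ht
  simp only [Finset.mem_insert, Finset.mem_singleton] at hts
  rcases hts with rfl | rfl | rfl | rfl | rfl | rfl | rfl | rfl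
  exacts [h_a htf, h_b htf, h_c htf, h_d htf, h_r htf, h_s htf, h_p htf, h_q htf]
end
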